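/- arXiv:2506.04670 — 5 statements merged into one kernel-verified Lean document; each statement's English description precedes it below -/
import Mathlib

section
/- Let q ≥ 3 be a prime power. Then the graph 𝒜𝒢(2,q) has girth 6, i.e., the shortest cycle in 𝒜𝒢(2,q) has length 6. -/
open SimpleGraph

/-- Vertices of `𝒜𝒢(2,q)`: points `(x, y)` (left) and lines `[m, k]` (right). -/
abbrev AGVertex (F : Type*) := (F × F) ⊕ (F × F)

/-- The point `(x, y)` lies on the line `[m, k]`: if `m ≠ 0` this means
`m * x + y = k`, and `[0, k] = {(k, y) : y ∈ F}`. -/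
def AGOnLine (F : Type*) [Field F] (p l : F × F) : Prop :=
  (l.1 = 0 ∧ p.1 = l.2) ∨ (l.1 ≠ 0 ∧ l.1 * p.1 + p.2 = l.2)

/-- Adjacency for `𝒜𝒢(2,q)`: a point is adjacent to the lines through it. -/
def AGAdj (F : Type*) [Field F] : AGVertex F → AGVertex F → Prop
  | .inl p, .inr l => AGOnLine F p l
  | .inr l, .inl p => AGOnLine F p l
  | _, _ => False

/-- The graph `𝒜𝒢(2,q)` (`AG(2,q)` minus a parallel class): the bipartite incidence
graph of the points and the lines `[m,k]` of the affine plane over `F`. -/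
def AGGraph (F : Type*) [Field F] : SimpleGraph (AGVertex F) where
  Adj := AGAdj F
  symm := ⟨by rintro (p | l) (q | m) h <;> simp only [AGAdj] at h ⊢ <;> exact h⟩
  loopless := ⟨by rintro (p | l) h <;> simp only [AGAdj] at h⟩

/-- The map `τ_{a,b,c,d}` on the vertices of `𝒜𝒢(2,q)`. -/
def AGtau (F : Type*) [Field F] (a b c d : F) : AGVertex F → AGVertex F
  | .inl (x, y) => .inl (a * x + b, c * y + d)
  | .inr (m, k) => .inr (a⁻¹ * m * c, a⁻¹ * m * b * c + c * k + d)

/-- The map `α` on the vertices of `𝒜𝒢(2,q)`. -/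
def AGalpha (F : Type*) [Field F] : AGVertex F → AGVertex F
  | .inl (x, y) => .inr (-x, -y)
  | .inr (m, k) => .inl (-m, -k)

/-- The generating set for the group `G = ⟨τ_{a,b,c,d}, α⟩`: those permutations of the
vertex set that act as some `τ_{a,b,c,d}` (with `a, c ≠ 0`) or as `α`. -/
def AGGens (F : Type*) [Field F] : Set (Equiv.Perm (AGVertex F)) :=
  {f | (∃ a b c d : F, a ≠ 0 ∧ c ≠ 0 ∧ ∀ v, f v = AGtau F a b c d v) ∨
    ∀ v, f v = AGalpha F v}

/-! `𝒜𝒢(2,q)` is bipartite, so its cycles have even length, and a 4-cycle would put two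
distinct points on two distinct lines. For `t ∉ {0, 1}`, which exists since `q ≥ 3`, the
points `(0,0)`, `(0,1)`, `(1,t)` and the lines `[0,0]`, `[1-t,1]`, `[-t,0]` joining them form
a 6-cycle. -/

lemma AGOnLine.eq_or_eq {F : Type*} [Field F] {p p' l l' : F × F}
    (hpl : AGOnLine F p l) (hpl' : AGOnLine F p l') (hp'l : AGOnLine F p' l)
    (hp'l' : AGOnLine F p' l') : p = p' ∨ l = l' := by
  simp only [AGOnLine, Prod.ext_iff] at *
  grind

namespace AGGraph

variable {F : Type*} [Field F]

@[simp]
lemma adj_inl_inr {p l : F × F} : (AGGraph F).Adj (.inl p) (.inr l) ↔ AGOnLine F p l := .rfl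

@[simp]
lemma adj_inr_inl {p l : F × F} : (AGGraph F).Adj (.inr l) (.inl p) ↔ AGOnLine F p l := .rfl

@[simp]
lemma not_adj_inl_inl {p p' : F × F} : ¬(AGGraph F).Adj (.inl p) (.inl p') := id

@[simp]
lemma not_adj_inr_inr {l l' : F × F} : ¬(AGGraph F).Adj (.inr l) (.inr l') := id

def bicoloring : (AGGraph F).Coloring Bool :=
  Coloring.mk Sum.isLeft <| by rintro (p | l) (p' | l') h <;> simp_all

lemma even_length {u : AGVertex F} (c : (AGGraph F).Walk u u) : Even c.length :=
  (bicoloring.even_length_iff_congr c).mpr .rfl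

lemma eq_or_eq_of_adj_of_adj_of_adj_of_adj {a b c d : AGVertex F} (hab : (AGGraph F).Adj a b)
    (hbc : (AGGraph F).Adj b c) (hcd : (AGGraph F).Adj c d) (hda : (AGGraph F).Adj d a) :
    a = c ∨ b = d := by
  rcases a with pa | la <;> rcases b with pb | lb <;> rcases c with pc | lc <;>
    rcases d with pd | ld <;>
    simp only [adj_inl_inr, adj_inr_inl, not_adj_inl_inl, not_adj_inr_inr] at *
  · simpa using hab.eq_or_eq hda hbc hcd
  · simpa [or_comm] using hab.eq_or_eq hbc hda hcd

lemma length_ne_four_of_isCycle {u : AGVertex F} {c : (AGGraph F).Walk u u} (hc : c.IsCycle) :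
    c.length ≠ 4 := by
  intro h4
  have hadj (i : ℕ) (hi : i < 4) : (AGGraph F).Adj (c.getVert i) (c.getVert (i + 1)) :=
    c.adj_getVert_succ (h4 ▸ hi)
  have hclose : c.getVert 4 = c.getVert 0 := by
    rw [← h4, Walk.getVert_length, Walk.getVert_zero]
  rcases eq_or_eq_of_adj_of_adj_of_adj_of_adj (hadj 0 (by norm_num)) (hadj 1 (by norm_num))
      (hadj 2 (by norm_num)) (hclose ▸ hadj 3 (by norm_num)) with h | h
  · exact hc.getVert_sub_one_ne_getVert_add_one (i := 1) (by omega) h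
  · exact hc.getVert_sub_one_ne_getVert_add_one (i := 2) (by omega) h

lemma six_le_length_of_isCycle {u : AGVertex F} {c : (AGGraph F).Walk u u} (hc : c.IsCycle) :
    6 ≤ c.length := by
  obtain ⟨k, hk⟩ := even_length c
  have := hc.three_le_length
  have := length_ne_four_of_isCycle hc
  omega

lemma exists_isCycle_length_six {t : F} (ht0 : t ≠ 0) (ht1 : t ≠ 1) :
    ∃ (u : AGVertex F) (c : (AGGraph F).Walk u u), c.IsCycle ∧ c.length = 6 := by
  have h1t : 1 - t ≠ 0 := sub_ne_zero.mpr ht1.symm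
  have hnt : -t ≠ 0 := neg_ne_zero.mpr ht0
  let c : (AGGraph F).Walk (.inl (0, 0)) (.inl (0, 0)) :=
    .cons (v := .inr (0, 0)) (by simp [AGOnLine]) <|
    .cons (v := .inl (0, 1)) (by simp [AGOnLine]) <|
    .cons (v := .inr (1 - t, 1)) (by simp [AGOnLine, h1t]) <|
    .cons (v := .inl (1, t)) (by simp [AGOnLine, h1t]) <|
    .cons (v := .inr (-t, 0)) (by simp [AGOnLine, hnt]) <|
    .cons (by simp [AGOnLine, hnt]) .nil
  have hlen : c.length = 6 := rfl
  refine ⟨_, c, Walk.isCycle_iff_isPath_tail_and_le_length.mpr ⟨.mk' ?_, by omega⟩, hlen⟩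
  simp [c, ht0]

end AGGraph

theorem AG_girth_eq_six_general (q : ℕ) (hq3 : 3 ≤ q)
    (F : Type*) [Field F] [Fintype F] (hF : Fintype.card F = q) :
    (AGGraph F).girth = 6 := by
  obtain ⟨t, ht0, ht1⟩ := ENat.exists_ne_ne_of_three_le
    (by simpa [ENat.card_eq_coe_fintype_card, hF] using hq3) (0 : F) 1
  obtain ⟨u, c, hc, hlen⟩ := AGGraph.exists_isCycle_length_six ht0 ht1
  have hegirth : (AGGraph F).egirth = 6 := by
    refine le_antisymm ?_ (le_egirth.mpr fun _ c' hc' => ?_)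
    · exact_mod_cast hlen ▸ egirth_le_length hc
    · exact_mod_cast AGGraph.six_le_length_of_isCycle hc'
  simp [girth, hegirth]

/-- For a prime power `q ≥ 3`, the graph `𝒜𝒢(2,q)` has girth `6`. -/
theorem AG_girth_eq_six (q : ℕ) (hq : IsPrimePow q) (hq3 : 3 ≤ q)
    (F : Type*) [Field F] [Fintype F] (hF : Fintype.card F = q) :
    (AGGraph F).girth = 6 :=
  AG_girth_eq_six_general q hq3 F hF
end

section
/- Let q ≥ 3 be a prime power. Then 𝒜𝒢(2,q) is distance-regular with intersection array {q, q−1, q−1, 1; 1, 1, q−1, q}: for all vertices u, v of 𝒜𝒢(2,q) with d(u,v) = i (0 ≤ i ≤ 4), the number of neighbors w of v with d(u,w) = i+1 equals b_i and the number of neighbors w of v with d(u,w) = i−1 equals c_i, where (b_0,b_1,b_2,b_3,b_4) = (q, q−1, q−1, 1, 0) and (c_0,c_1,c_2,c_3,c_4) = (0, 1, 1, q−1, q). -/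
open SimpleGraph

/-!
Two distinct points are joined by a line unless they lie on a common horizontal (the removed
parallel class), and two distinct lines meet unless they are parallel. Since the graph is
bipartite, this determines every distance, which is at most 4. The `q` neighbours of a vertex
are parametrised by `F` (the lines through a point by their slope, the points of a line by their
height), and seen from any vertex `u` all neighbours of `v` are at one distance `b` except at
most one, at distance `a`. The pair `(a, b)` depends only on `d(u, v)`, and counting gives the
intersection numbers.
-/

lemma Nat.card_setOf_ite_eq {α : Type*} [Fintype α] [DecidableEq α] (x₀ : α) (a b n : ℕ) :
    Nat.card {x : α | (if x = x₀ then a else b) = n} =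
      (if a = n then 1 else 0) + (if b = n then Fintype.card α - 1 else 0) := by
  by_cases ha : a = n <;> by_cases hb : b = n
  · have : 0 < Fintype.card α := Fintype.card_pos_iff.2 ⟨x₀⟩
    have hset : {x : α | (if x = x₀ then a else b) = n} = Set.univ := by
      ext x; by_cases hx : x = x₀ <;> simp [hx, ha, hb]
    rw [hset, Nat.card_univ, Nat.card_eq_fintype_card, if_pos ha, if_pos hb]
    omega
  · simp [ha, hb]
  · have hset : {x : α | (if x = x₀ then a else b) = n} = {x | x ≠ x₀} := by
      ext x; by_cases hx : x = x₀ <;> simp [hx, ha, hb]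
    rw [hset, Nat.card_eq_fintype_card, Set.card_ne_eq, if_neg ha, if_pos hb, zero_add]
  · have hset : {x : α | (if x = x₀ then a else b) = n} = ∅ := by
      ext x; by_cases hx : x = x₀ <;> simp [hx, ha, hb]
    simp [hset, ha, hb]

namespace SimpleGraph

open scoped Classical

variable {V : Type*} {G : SimpleGraph V} (c : G.Coloring Bool) {u v : V}

lemma Coloring.even_dist_iff (h : G.Reachable u v) : Even (G.dist u v) ↔ (c u ↔ c v) := by
  obtain ⟨w, hw⟩ := h.exists_walk_length_eq_dist
  rw [← hw, c.even_length_iff_congr]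

lemma Coloring.dist_eq_of_apply_ne (h : G.Reachable u v) (hc : c u ≠ c v)
    (h3 : G.dist u v ≤ 3) : G.dist u v = if G.Adj u v then 1 else 3 := by
  split_ifs with hadj
  · exact dist_eq_one_iff_adj.2 hadj
  · have hodd : ¬ Even (G.dist u v) := by
      rw [c.even_dist_iff h]
      simpa [← Bool.eq_iff_iff] using hc
    have h1 : G.dist u v ≠ 1 := mt dist_eq_one_iff_adj.1 hadj
    rw [Nat.not_even_iff_odd, Nat.odd_iff] at hodd
    omega

lemma Coloring.dist_eq_of_apply_eq (h : G.Reachable u v) (hc : c u = c v)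
    (h4 : G.dist u v ≤ 4) :
    G.dist u v = if u = v then 0 else if (G.commonNeighbors u v).Nonempty then 2 else 4 := by
  have hadj : ¬ G.Adj u v := fun hadj => c.valid hadj hc
  have h2 : G.dist u v = 2 ↔ u ≠ v ∧ (G.commonNeighbors u v).Nonempty := by
    rw [← Nat.cast_inj (R := ℕ∞), h.coe_dist_eq_edist, Nat.cast_ofNat, edist_eq_two_iff]
    simp [hadj]
  split_ifs with huv hcn
  · simp [huv]
  · exact h2.2 ⟨huv, hcn⟩
  · have heven : Even (G.dist u v) := (c.even_dist_iff h).2 (by rw [hc])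
    have h0 : G.dist u v ≠ 0 := mt h.dist_eq_zero_iff.1 huv
    have : G.dist u v ≠ 2 := fun h' => hcn (h2.1 h').2
    rw [Nat.even_iff] at heven
    omega

end SimpleGraph

namespace AG

open scoped Classical

variable {F : Type*} [Field F] {p p' r l l' : F × F}

noncomputable def lineThrough (p : F × F) (m : F) : F × F :=
  (m, if m = 0 then p.1 else m * p.1 + p.2)

-- Points of a line are parametrised by their height, as no line is horizontal.
noncomputable def pointAt (l : F × F) (y : F) : F × F :=
  (if l.1 = 0 then l.2 else (l.2 - y) / l.1, y)

@[simp] lemma lineThrough_fst (p : F × F) (m : F) : (lineThrough p m).1 = m := rfl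

@[simp] lemma pointAt_snd (l : F × F) (y : F) : (pointAt l y).2 = y := rfl

lemma onLine_lineThrough (p : F × F) (m : F) : AGOnLine F p (lineThrough p m) := by
  by_cases hm : m = 0
  · exact .inl ⟨hm, by simp [lineThrough, hm]⟩
  · exact .inr ⟨hm, by simp [lineThrough, hm]⟩

lemma onLine_pointAt (l : F × F) (y : F) : AGOnLine F (pointAt l y) l := by
  by_cases hl : l.1 = 0
  · exact .inl ⟨hl, by simp [pointAt, hl]⟩
  · exact .inr ⟨hl, by simp only [pointAt, hl, if_false]; field_simp; ring⟩

lemma lineThrough_eq (h : AGOnLine F p l) : lineThrough p l.1 = l := by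
  rcases h with ⟨hl, hp⟩ | ⟨hl, hp⟩ <;> ext <;> simp [lineThrough, *]

lemma pointAt_eq (h : AGOnLine F p l) : pointAt l p.2 = p := by
  rcases h with ⟨hl, hp⟩ | ⟨hl, hp⟩
  · ext <;> simp [pointAt, *]
  · ext
    · simp only [pointAt, hl, if_false]
      field_simp
      linear_combination -hp
    · rfl

lemma line_eq_of_fst_eq (hl : AGOnLine F p l) (hl' : AGOnLine F p l') (h : l.1 = l'.1) :
    l = l' := by
  rw [← lineThrough_eq hl, ← lineThrough_eq hl', h]

lemma point_eq_of_snd_eq (hp : AGOnLine F p l) (hp' : AGOnLine F p' l) (h : p.2 = p'.2) :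
    p = p' := by
  rw [← pointAt_eq hp, ← pointAt_eq hp', h]

lemma fst_eq_of_onLine (hne : p ≠ p') (hp : AGOnLine F p l) (hp' : AGOnLine F p' l) :
    l.1 = if p.1 = p'.1 then 0 else (p'.2 - p.2) / (p.1 - p'.1) := by
  rcases hp with ⟨hl, hp⟩ | ⟨hl, hp⟩ <;> rcases hp' with ⟨hl', hp'⟩ | ⟨hl', hp'⟩
  · simp [hl, hp, hp']
  · exact absurd hl hl'
  · exact absurd hl' hl
  · have hx : p.1 ≠ p'.1 := fun hx =>
      hne (Prod.ext hx (by linear_combination hp - hp' - l.1 * hx))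
    rw [if_neg hx, eq_div_iff (sub_ne_zero.2 hx)]
    linear_combination hp - hp'

lemma line_eq_of_ne (hne : p ≠ p') (hp : AGOnLine F p l) (hp' : AGOnLine F p' l)
    (hl : AGOnLine F p l') (hl' : AGOnLine F p' l') : l = l' :=
  line_eq_of_fst_eq hp hl (by rw [fst_eq_of_onLine hne hp hp', fst_eq_of_onLine hne hl hl'])

lemma point_eq_of_ne (hne : l ≠ l') (hp : AGOnLine F p l) (hp' : AGOnLine F p l')
    (hr : AGOnLine F r l) (hr' : AGOnLine F r l') : p = r := by
  by_contra h
  exact hne (line_eq_of_ne h hp hr hp' hr')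

lemma exists_line_iff :
    (∃ l, AGOnLine F p l ∧ AGOnLine F p' l) ↔ p.1 = p'.1 ∨ p.2 ≠ p'.2 := by
  constructor
  · rintro ⟨l, hp, hp'⟩
    by_contra! h
    exact h.1 (congrArg Prod.fst (point_eq_of_snd_eq hp hp' h.2))
  · rintro h
    by_cases hx : p.1 = p'.1
    · exact ⟨(0, p.1), .inl ⟨rfl, rfl⟩, .inl ⟨rfl, hx.symm⟩⟩
    · have hy := h.resolve_left hx
      have hm : (p'.2 - p.2) / (p.1 - p'.1) ≠ 0 :=
        div_ne_zero (sub_ne_zero.2 hy.symm) (sub_ne_zero.2 hx)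
      refine ⟨lineThrough p ((p'.2 - p.2) / (p.1 - p'.1)), onLine_lineThrough _ _,
        .inr ⟨hm, ?_⟩⟩
      simp only [lineThrough, hm, if_false]
      field_simp [sub_ne_zero.2 hx]
      ring

lemma exists_point_of_fst_ne (h : l.1 ≠ l'.1) : ∃ p, AGOnLine F p l ∧ AGOnLine F p l' := by
  wlog hl' : l'.1 ≠ 0 generalizing l l'
  · obtain ⟨p, hp, hp'⟩ := this (Ne.symm h) (by rwa [not_not.1 hl'] at h)
    exact ⟨p, hp', hp⟩
  by_cases hl : l.1 = 0
  · exact ⟨(l.2, l'.2 - l'.1 * l.2), .inl ⟨hl, rfl⟩, .inr ⟨hl', by ring⟩⟩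
  · obtain ⟨x, hx⟩ : ∃ x, (l.1 - l'.1) * x = l.2 - l'.2 :=
      ⟨_, mul_div_cancel₀ _ (sub_ne_zero.2 h)⟩
    exact ⟨(x, l.2 - l.1 * x), .inr ⟨hl, by ring⟩,
      .inr ⟨hl', by linear_combination -hx⟩⟩

lemma exists_point_iff (hne : l ≠ l') :
    (∃ p, AGOnLine F p l ∧ AGOnLine F p l') ↔ l.1 ≠ l'.1 :=
  ⟨fun ⟨_, hp, hp'⟩ h => hne (line_eq_of_fst_eq hp hp' h), exists_point_of_fst_ne⟩

def coloring : (AGGraph F).Coloring Bool :=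
  Coloring.mk Sum.isLeft (by rintro (_ | _) (_ | _) h <;> simp_all [AGGraph, AGAdj])

lemma adj_inl_inr : (AGGraph F).Adj (.inl p) (.inr l) ↔ AGOnLine F p l := Iff.rfl

lemma adj_inr_inl : (AGGraph F).Adj (.inr l) (.inl p) ↔ AGOnLine F p l := Iff.rfl

lemma exists_walk_inl_inr (p l : F × F) :
    ∃ w : (AGGraph F).Walk (.inl p) (.inr l), w.length = 3 := by
  obtain ⟨r, hr, hr'⟩ :=
    exists_point_of_fst_ne (l := lineThrough p (l.1 + 1)) (l' := l) (by simp)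
  exact ⟨.cons (adj_inl_inr.2 (onLine_lineThrough p _))
    (.cons (adj_inr_inl.2 hr) (.cons (adj_inl_inr.2 hr') .nil)), rfl⟩

lemma reachable_inl_inr (p l : F × F) : (AGGraph F).Reachable (.inl p) (.inr l) :=
  let ⟨w, _⟩ := exists_walk_inl_inr p l; ⟨w⟩

lemma connected : (AGGraph F).Connected := by
  refine Connected.mk fun u v => ?_
  rcases u with p | l <;> rcases v with p' | l'
  · exact (reachable_inl_inr p 0).trans (reachable_inl_inr p' 0).symm
  · exact reachable_inl_inr p l'
  · exact (reachable_inl_inr p' l).symm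
  · exact (reachable_inl_inr 0 l).symm.trans (reachable_inl_inr 0 l')

lemma dist_inl_inr_le (p l : F × F) : (AGGraph F).dist (.inl p) (.inr l) ≤ 3 :=
  let ⟨w, hw⟩ := exists_walk_inl_inr p l; hw ▸ dist_le w

lemma dist_inl_inl_le (p p' : F × F) : (AGGraph F).dist (.inl p) (.inl p') ≤ 4 :=
  calc (AGGraph F).dist (.inl p) (.inl p')
      ≤ (AGGraph F).dist (.inl p) (.inr (lineThrough p' 0)) +
          (AGGraph F).dist (.inr (lineThrough p' 0)) (.inl p') := connected.dist_triangle
    _ ≤ 3 + 1 := by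
      gcongr
      · exact dist_inl_inr_le p _
      · exact (dist_eq_one_iff_adj.2 (adj_inr_inl.2 (onLine_lineThrough p' 0))).le

lemma dist_inr_inr_le (l l' : F × F) : (AGGraph F).dist (.inr l) (.inr l') ≤ 4 :=
  calc (AGGraph F).dist (.inr l) (.inr l')
      ≤ (AGGraph F).dist (.inr l) (.inl (pointAt l 0)) +
          (AGGraph F).dist (.inl (pointAt l 0)) (.inr l') := connected.dist_triangle
    _ ≤ 1 + 3 := by
      gcongr
      · exact (dist_eq_one_iff_adj.2 (adj_inr_inl.2 (onLine_pointAt l 0))).le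
      · exact dist_inl_inr_le _ l'

lemma commonNeighbors_inl_nonempty_iff :
    ((AGGraph F).commonNeighbors (.inl p) (.inl p')).Nonempty ↔
      ∃ l, AGOnLine F p l ∧ AGOnLine F p' l := by
  constructor
  · rintro ⟨_ | l, h⟩
    · exact h.1.elim
    · exact ⟨l, h⟩
  · rintro ⟨l, h⟩
    exact ⟨.inr l, h⟩

lemma commonNeighbors_inr_nonempty_iff :
    ((AGGraph F).commonNeighbors (.inr l) (.inr l')).Nonempty ↔
      ∃ p, AGOnLine F p l ∧ AGOnLine F p l' := by
  constructor
  · rintro ⟨p | _, h⟩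
    · exact ⟨p, h⟩
    · exact h.1.elim
  · rintro ⟨p, h⟩
    exact ⟨.inl p, h⟩

lemma dist_inl_inr (p l : F × F) :
    (AGGraph F).dist (.inl p) (.inr l) = if AGOnLine F p l then 1 else 3 :=
  coloring.dist_eq_of_apply_ne (connected.preconnected _ _) (show true ≠ false by decide)
    (dist_inl_inr_le p l)

lemma dist_inr_inl (l p : F × F) :
    (AGGraph F).dist (.inr l) (.inl p) = if AGOnLine F p l then 1 else 3 := by
  rw [dist_comm, dist_inl_inr]

lemma dist_inl_inl (p p' : F × F) : (AGGraph F).dist (.inl p) (.inl p') =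
    if p = p' then 0 else if p.1 = p'.1 ∨ p.2 ≠ p'.2 then 2 else 4 := by
  rw [coloring.dist_eq_of_apply_eq (connected.preconnected (.inl p) (.inl p')) rfl
      (dist_inl_inl_le p p'),
    commonNeighbors_inl_nonempty_iff, exists_line_iff]
  simp only [Sum.inl.injEq]
  congr

lemma dist_inr_inr (l l' : F × F) : (AGGraph F).dist (.inr l) (.inr l') =
    if l = l' then 0 else if l.1 ≠ l'.1 then 2 else 4 := by
  rw [coloring.dist_eq_of_apply_eq (connected.preconnected (.inr l) (.inr l')) rfl
      (dist_inr_inr_le l l'),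
    commonNeighbors_inr_nonempty_iff]
  by_cases h : l = l'
  · simp [h]
  · simp [h, exists_point_iff h]

noncomputable def neighbor : AGVertex F → F → AGVertex F
  | .inl p, m => .inr (lineThrough p m)
  | .inr l, y => .inl (pointAt l y)

lemma neighbor_injective (v : AGVertex F) : Function.Injective (neighbor v) := by
  rcases v with p | l <;> intro x y h
  · exact congrArg Prod.fst (Sum.inr_injective h)
  · exact congrArg Prod.snd (Sum.inl_injective h)

lemma range_neighbor (v : AGVertex F) : Set.range (neighbor v) = (AGGraph F).neighborSet v := by
  ext w
  rcases v with p | l <;> rcases w with p' | l'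
  · simp [neighbor, AGGraph, AGAdj]
  · simp only [neighbor, Set.mem_range, Sum.inr.injEq, mem_neighborSet, adj_inl_inr]
    exact ⟨by rintro ⟨m, rfl⟩; exact onLine_lineThrough p m,
      fun h => ⟨l'.1, lineThrough_eq h⟩⟩
  · simp only [neighbor, Set.mem_range, Sum.inl.injEq, mem_neighborSet, adj_inr_inl]
    exact ⟨by rintro ⟨y, rfl⟩; exact onLine_pointAt l y, fun h => ⟨p'.2, pointAt_eq h⟩⟩
  · simp [neighbor, AGGraph, AGAdj]

lemma card_setOf_adj_and (v : AGVertex F) (P : AGVertex F → Prop) :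
    Nat.card {w | (AGGraph F).Adj v w ∧ P w} = Nat.card {x | P (neighbor v x)} := by
  have : {w | (AGGraph F).Adj v w ∧ P w} = neighbor v '' {x | P (neighbor v x)} := by
    ext w
    rw [Set.mem_ofPred_eq, ← mem_neighborSet, ← range_neighbor]
    constructor
    · rintro ⟨⟨x, rfl⟩, hP⟩
      exact ⟨x, hP, rfl⟩
    · rintro ⟨x, hP, rfl⟩
      exact ⟨⟨x, rfl⟩, hP⟩
  rw [this, Nat.card_image_of_injective (neighbor_injective v)]

def DistProfile (u v : AGVertex F) (a b : ℕ) : Prop :=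
  ∃ x₀, ∀ x, (AGGraph F).dist u (neighbor v x) = if x = x₀ then a else b

lemma card_adj_dist_eq [Fintype F] {u v : AGVertex F} {a b : ℕ} (h : DistProfile u v a b)
    (n : ℕ) : Nat.card {w | (AGGraph F).Adj v w ∧ (AGGraph F).dist u w = n} =
      (if a = n then 1 else 0) + (if b = n then Fintype.card F - 1 else 0) := by
  obtain ⟨x₀, hx₀⟩ := h
  simp only [card_setOf_adj_and, hx₀]
  exact Nat.card_setOf_ite_eq x₀ a b n

lemma distProfile_const {u v : AGVertex F} {c : ℕ}
    (h : ∀ x, (AGGraph F).dist u (neighbor v x) = c) : DistProfile u v c c :=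
  ⟨0, fun x => by rw [h, ite_self]⟩

lemma exists_distProfile_inl_inl (p' p : F × F) : ∃ i : Fin 5,
    (AGGraph F).dist (.inl p') (.inl p) = i ∧
      DistProfile (.inl p') (.inl p) (![1, 0, 1, 4, 3] i) (![1, 2, 3, 2, 3] i) := by
  have hdist : ∀ m, (AGGraph F).dist (.inl p') (neighbor (.inl p) m) =
      if AGOnLine F p' (lineThrough p m) then 1 else 3 := fun m => dist_inl_inr _ _
  by_cases he : p' = p
  · subst he
    exact ⟨0, dist_self, distProfile_const fun m => by simp [hdist, onLine_lineThrough]⟩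
  by_cases hc : ∃ l, AGOnLine F p' l ∧ AGOnLine F p l
  · obtain ⟨l, hl', hl⟩ := hc
    refine ⟨2, by simp [dist_inl_inl, he, exists_line_iff.1 ⟨l, hl', hl⟩], l.1, fun m => ?_⟩
    have : AGOnLine F p' (lineThrough p m) ↔ m = l.1 := by
      constructor
      · intro h
        simpa using congrArg Prod.fst (line_eq_of_ne he h (onLine_lineThrough p m) hl' hl)
      · rintro rfl
        rwa [lineThrough_eq hl]
    simp [hdist, this]
  · refine ⟨4, by simp [dist_inl_inl, he, ← exists_line_iff, hc],
      distProfile_const fun m => ?_⟩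
    have : ¬ AGOnLine F p' (lineThrough p m) := fun h => hc ⟨_, h, onLine_lineThrough p m⟩
    simp [hdist, this]

lemma exists_distProfile_inr_inl (l p : F × F) : ∃ i : Fin 5,
    (AGGraph F).dist (.inr l) (.inl p) = i ∧
      DistProfile (.inr l) (.inl p) (![1, 0, 1, 4, 3] i) (![1, 2, 3, 2, 3] i) := by
  have hdist : ∀ m, (AGGraph F).dist (.inr l) (neighbor (.inl p) m) =
      if l = lineThrough p m then 0 else if l.1 ≠ m then 2 else 4 := fun m => dist_inr_inr _ _
  by_cases h : AGOnLine F p l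
  · refine ⟨1, by simp [dist_inr_inl, h], l.1, fun m => ?_⟩
    by_cases hm : m = l.1
    · simp [hdist, hm, lineThrough_eq h]
    · have : l ≠ lineThrough p m := fun he => hm (by rw [he, lineThrough_fst])
      simp [hdist, hm, this, Ne.symm hm]
  · refine ⟨3, by simp [dist_inr_inl, h], l.1, fun m => ?_⟩
    have : l ≠ lineThrough p m := fun he => h (he ▸ onLine_lineThrough p m)
    by_cases hm : m = l.1
    · subst hm
      simp [hdist, this]
    · simp [hdist, hm, this, Ne.symm hm]

lemma exists_distProfile_inl_inr (p l : F × F) : ∃ i : Fin 5,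
    (AGGraph F).dist (.inl p) (.inr l) = i ∧
      DistProfile (.inl p) (.inr l) (![1, 0, 1, 4, 3] i) (![1, 2, 3, 2, 3] i) := by
  have hdist : ∀ y, (AGGraph F).dist (.inl p) (neighbor (.inr l) y) =
      if p = pointAt l y then 0 else if p.1 = (pointAt l y).1 ∨ p.2 ≠ y then 2 else 4 :=
    fun y => dist_inl_inl _ _
  by_cases h : AGOnLine F p l
  · refine ⟨1, by simp [dist_inl_inr, h], p.2, fun y => ?_⟩
    by_cases hy : y = p.2
    · simp [hdist, hy, pointAt_eq h]
    · have : p ≠ pointAt l y := fun he => hy (by rw [he, pointAt_snd])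
      simp [hdist, hy, this, Ne.symm hy]
  · refine ⟨3, by simp [dist_inl_inr, h], p.2, fun y => ?_⟩
    have hne : p ≠ pointAt l y := fun he => h (he ▸ onLine_pointAt l y)
    by_cases hy : y = p.2
    · subst hy
      have : p.1 ≠ (pointAt l p.2).1 := fun hx => hne (Prod.ext hx rfl)
      simp [hdist, hne, this]
    · simp [hdist, hne, hy, Ne.symm hy]

lemma exists_distProfile_inr_inr (l' l : F × F) : ∃ i : Fin 5,
    (AGGraph F).dist (.inr l') (.inr l) = i ∧
      DistProfile (.inr l') (.inr l) (![1, 0, 1, 4, 3] i) (![1, 2, 3, 2, 3] i) := by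
  have hdist : ∀ y, (AGGraph F).dist (.inr l') (neighbor (.inr l) y) =
      if AGOnLine F (pointAt l y) l' then 1 else 3 := fun y => dist_inr_inl _ _
  by_cases he : l' = l
  · subst he
    exact ⟨0, dist_self, distProfile_const fun y => by simp [hdist, onLine_pointAt]⟩
  by_cases hs : l'.1 ≠ l.1
  · obtain ⟨r, hr', hr⟩ := exists_point_of_fst_ne hs
    refine ⟨2, by simp [dist_inr_inr, he, hs], r.2, fun y => ?_⟩
    have : AGOnLine F (pointAt l y) l' ↔ y = r.2 := by
      constructor
      · intro h
        simpa using congrArg Prod.snd (point_eq_of_ne (Ne.symm he) (onLine_pointAt l y) h hr hr')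
      · rintro rfl
        rwa [pointAt_eq hr]
    simp [hdist, this]
  · refine ⟨4, by simp [dist_inr_inr, he, hs], distProfile_const fun y => ?_⟩
    have : ¬ AGOnLine F (pointAt l y) l' := fun h =>
      he (line_eq_of_fst_eq h (onLine_pointAt l y) (not_not.1 hs))
    simp [hdist, this]

lemma exists_distProfile (u v : AGVertex F) : ∃ i : Fin 5,
    (AGGraph F).dist u v = i ∧ DistProfile u v (![1, 0, 1, 4, 3] i) (![1, 2, 3, 2, 3] i) := by
  rcases u with p' | l' <;> rcases v with p | l
  · exact exists_distProfile_inl_inl p' p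
  · exact exists_distProfile_inl_inr p' l
  · exact exists_distProfile_inr_inl l' p
  · exact exists_distProfile_inr_inr l' l

end AG

theorem AG_distance_regular_general (q : ℕ)
    (F : Type*) [Field F] [Fintype F] (hF : Fintype.card F = q) :
    ∀ u v : AGVertex F, ∀ i : Fin 5, (AGGraph F).dist u v = (i : ℕ) →
      Nat.card {w : AGVertex F |
          (AGGraph F).Adj v w ∧ (AGGraph F).dist u w = (i : ℕ) + 1} =
        ![q, q - 1, q - 1, 1, 0] i ∧
      Nat.card {w : AGVertex F |
          (AGGraph F).Adj v w ∧ (AGGraph F).dist u w = (i : ℕ) - 1} =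
        ![0, 1, 1, q - 1, q] i := by
  intro u v i h
  obtain ⟨j, hj, hprof⟩ := AG.exists_distProfile u v
  obtain rfl : i = j := Fin.ext (h.symm.trans hj)
  have hq : 0 < q := hF ▸ Fintype.card_pos
  rw [AG.card_adj_dist_eq hprof, AG.card_adj_dist_eq hprof, hF]
  fin_cases i <;> simp <;> omega

/-- For a prime power `q ≥ 3`, the graph `𝒜𝒢(2,q)` is
distance-regular with intersection array `{q, q-1, q-1, 1; 1, 1, q-1, q}`: whenever
`d(u,v) = i` with `0 ≤ i ≤ 4`, the number of neighbours of `v` at distance `i+1`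
from `u` is `bᵢ` and the number of neighbours of `v` at distance `i-1` from `u` is
`cᵢ`, where `(b₀,…,b₄) = (q, q-1, q-1, 1, 0)` and `(c₀,…,c₄) = (0, 1, 1, q-1, q)`. -/
theorem AG_distance_regular (q : ℕ) (hq : IsPrimePow q) (hq3 : 3 ≤ q)
    (F : Type*) [Field F] [Fintype F] (hF : Fintype.card F = q) :
    ∀ u v : AGVertex F, ∀ i : Fin 5, (AGGraph F).dist u v = (i : ℕ) →
      Nat.card {w : AGVertex F |
          (AGGraph F).Adj v w ∧ (AGGraph F).dist u w = (i : ℕ) + 1} =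
        ![q, q - 1, q - 1, 1, 0] i ∧
      Nat.card {w : AGVertex F |
          (AGGraph F).Adj v w ∧ (AGGraph F).dist u w = (i : ℕ) - 1} =
        ![0, 1, 1, q - 1, q] i :=
  AG_distance_regular_general q F hF
end

section
/- The Paley graph P(13) on the field of 13 elements is 1-geodesic transitive but not 2-geodesic transitive: Aut(P(13)) acts transitively on the vertices and on the ordered pairs of adjacent vertices of P(13), but there exist two 2-geodesics of P(13) that are not mapped to one another by any automorphism of P(13). -/
open SimpleGraph

/-- The Paley graph on a finite field `F` with `|F| ≡ 1 (mod 4)`: distinct `u, v`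
are adjacent iff `u - v` is a (necessarily nonzero) square. -/
def paleyGraph (F : Type*) [Field F] [Fintype F] (h : Fintype.card F % 4 = 1) :
    SimpleGraph F where
  Adj u v := u ≠ v ∧ ∃ s : F, u - v = s ^ 2
  symm := ⟨by
    rintro u v ⟨huv, s, hs⟩
    refine ⟨huv.symm, ?_⟩
    obtain ⟨i, hi⟩ : IsSquare (-1 : F) :=
      (FiniteField.isSquare_neg_one_iff).2 (by omega)
    exact ⟨i * s, by linear_combination -hs + s ^ 2 * hi⟩⟩
  loopless := ⟨fun u h => h.1 rfl⟩

variable {V : Type*}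

/-- The automorphism group of a simple graph, as a subgroup of the permutation
group of the vertex set. -/
def SimpleGraph.autGroup (Γ : SimpleGraph V) : Subgroup (Equiv.Perm V) where
  carrier := {f | ∀ u v : V, Γ.Adj (f u) (f v) ↔ Γ.Adj u v}
  one_mem' := by intro u v; simp
  mul_mem' := by
    intro f g hf hg u v
    simp only [Equiv.Perm.mul_apply]
    rw [hf, hg]
  inv_mem' := by
    intro f hf u v
    have h := hf (f⁻¹ u) (f⁻¹ v)
    simpa using h.symm

instance : Fact (Nat.Prime 13) := ⟨by norm_num⟩

/-- The Paley graph `P(13)` on the field of `13` elements. -/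
def paley13 : SimpleGraph (ZMod 13) := paleyGraph (ZMod 13) (by rw [ZMod.card])

/-!
The affine maps `x ↦ a * x + b` with `a` a nonzero square preserve Paley adjacency, and they
already act transitively on arcs, since the quotient of two nonzero squares is a square. An
automorphism carrying one `2`-geodesic to another preserves whether its three vertices have a
common neighbour: in `P(13)` the vertices `0, 3, 2` are all adjacent to `12`, whereas `0, 1, 2`
have no common neighbour.
-/

namespace SimpleGraph

variable {Γ : SimpleGraph V} {g : Equiv.Perm V}

lemma dist_eq_two_of_adj_of_adj {u v w : V} (huv : Γ.Adj u v) (hvw : Γ.Adj v w) (huw : u ≠ w)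
    (hnadj : ¬ Γ.Adj u w) : Γ.dist u w = 2 := by
  rw [dist, edist_eq_two_iff.mpr ⟨huw, hnadj, v, huv, hvw.symm⟩]
  rfl

lemma adj_inv_apply_iff (hg : g ∈ Γ.autGroup) (w u : V) :
    Γ.Adj (g⁻¹ w) u ↔ Γ.Adj w (g u) := by
  rw [← hg, ← Equiv.Perm.mul_apply, mul_inv_cancel, Equiv.Perm.one_apply]

lemma exists_common_adj_of_mem_autGroup (hg : g ∈ Γ.autGroup) {u₀ u₁ u₂ : V}
    (h : ∃ w, Γ.Adj w (g u₀) ∧ Γ.Adj w (g u₁) ∧ Γ.Adj w (g u₂)) :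
    ∃ w, Γ.Adj w u₀ ∧ Γ.Adj w u₁ ∧ Γ.Adj w u₂ := by
  obtain ⟨w, hw⟩ := h
  exact ⟨g⁻¹ w, by simpa only [adj_inv_apply_iff hg] using hw⟩

end SimpleGraph

lemma isSquare_mul_iff_of_isSquare {G₀ : Type*} [CommGroupWithZero G₀] {a z : G₀}
    (ha : IsSquare a) (ha0 : a ≠ 0) : IsSquare (a * z) ↔ IsSquare z := by
  refine ⟨fun h => ?_, ha.mul⟩
  simpa [ha0] using ha.inv.mul h

section Paley

variable {F : Type*} [Field F]

def affinePerm (a b : F) (ha : a ≠ 0) : Equiv.Perm F :=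
  (Equiv.mulLeft₀ a ha).trans (Equiv.addRight b)

@[simp]
lemma affinePerm_apply (a b : F) (ha : a ≠ 0) (x : F) : affinePerm a b ha x = a * x + b := rfl

variable [Fintype F] (h : Fintype.card F % 4 = 1)

lemma paleyGraph_adj_iff {u v : F} : (paleyGraph F h).Adj u v ↔ u ≠ v ∧ IsSquare (u - v) :=
  and_congr_right fun _ => exists_congr fun s => by rw [sq]

lemma affinePerm_mem_autGroup_paleyGraph {a : F} (b : F) (ha : IsSquare a) (ha0 : a ≠ 0) :
    affinePerm a b ha0 ∈ (paleyGraph F h).autGroup := by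
  intro x y
  simp only [paleyGraph_adj_iff, affinePerm_apply, ne_eq, add_left_inj, mul_right_inj' ha0,
    add_sub_add_right_eq_sub, ← mul_sub, isSquare_mul_iff_of_isSquare ha ha0]

lemma paleyGraph_vertex_transitive (u v : F) :
    ∃ g ∈ (paleyGraph F h).autGroup, g u = v :=
  ⟨affinePerm 1 (v - u) one_ne_zero,
    affinePerm_mem_autGroup_paleyGraph h _ IsSquare.one one_ne_zero, by simp⟩

lemma paleyGraph_arc_transitive {u₀ u₁ v₀ v₁ : F} (hu : (paleyGraph F h).Adj u₀ u₁)
    (hv : (paleyGraph F h).Adj v₀ v₁) :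
    ∃ g ∈ (paleyGraph F h).autGroup, g u₀ = v₀ ∧ g u₁ = v₁ := by
  rw [paleyGraph_adj_iff] at hu hv
  have hu0 : u₀ - u₁ ≠ 0 := sub_ne_zero.mpr hu.1
  have hv0 : v₀ - v₁ ≠ 0 := sub_ne_zero.mpr hv.1
  set a := (v₀ - v₁) / (u₀ - u₁)
  have ha0 : a ≠ 0 := div_ne_zero hv0 hu0
  have ha : a * (u₀ - u₁) = v₀ - v₁ := div_mul_cancel₀ _ hu0
  refine ⟨affinePerm a (v₀ - a * u₀) ha0,
    affinePerm_mem_autGroup_paleyGraph h _ (hv.2.div hu.2) ha0, by simp, ?_⟩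
  simp only [affinePerm_apply]
  linear_combination -ha

end Paley

instance : DecidableRel paley13.Adj := fun u v =>
  decidable_of_iff (u ≠ v ∧ ∃ s : ZMod 13, u - v = s ^ 2) Iff.rfl

lemma paley13_dist_zero_two : paley13.dist 0 2 = 2 :=
  dist_eq_two_of_adj_of_adj (v := 1) (by decide) (by decide) (by decide) (by decide)

lemma paley13_no_common_adj_zero_one_two :
    ¬ ∃ w, paley13.Adj w 0 ∧ paley13.Adj w 1 ∧ paley13.Adj w 2 := by
  decide

/-- The Paley graph `P(13)` is `1`-geodesic transitive but not
`2`-geodesic transitive: its automorphism group is transitive on vertices and on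
ordered pairs of adjacent vertices, but some two `2`-geodesics are not equivalent
under any automorphism. -/
theorem paley13_one_geodesic_transitive_not_two :
    (∀ u v : ZMod 13, ∃ g ∈ paley13.autGroup, g u = v) ∧
    (∀ u₀ u₁ v₀ v₁ : ZMod 13, paley13.Adj u₀ u₁ → paley13.Adj v₀ v₁ →
      ∃ g ∈ paley13.autGroup, g u₀ = v₀ ∧ g u₁ = v₁) ∧
    ∃ u₀ u₁ u₂ v₀ v₁ v₂ : ZMod 13,
      (paley13.Adj u₀ u₁ ∧ paley13.Adj u₁ u₂ ∧ paley13.dist u₀ u₂ = 2) ∧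
      (paley13.Adj v₀ v₁ ∧ paley13.Adj v₁ v₂ ∧ paley13.dist v₀ v₂ = 2) ∧
      ∀ g ∈ paley13.autGroup, ¬ (g u₀ = v₀ ∧ g u₁ = v₁ ∧ g u₂ = v₂) := by
  refine ⟨paleyGraph_vertex_transitive _, fun _ _ _ _ => paleyGraph_arc_transitive _, ?_⟩
  -- 12 is adjacent to 0, 3 and 2, while 0, 1 and 2 have no common neighbour.
  refine ⟨0, 1, 2, 0, 3, 2, ⟨by decide, by decide, paley13_dist_zero_two⟩,
    ⟨by decide, by decide, paley13_dist_zero_two⟩, ?_⟩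
  rintro g hg ⟨h₀, h₁, h₂⟩
  exact paley13_no_common_adj_zero_one_two
    (exists_common_adj_of_mem_autGroup hg ⟨12, by rw [h₀, h₁, h₂]; decide⟩)
end

section
/- Let n and k be integers with 2 ≤ k ≤ n−k. Then the Johnson graph J(n,k) is geodesic transitive but not 2-arc transitive: Aut(J(n,k)) acts transitively on the set of i-geodesics of J(n,k) for every 1 ≤ i ≤ diam(J(n,k)) = k, but Aut(J(n,k)) does not act transitively on the set of 2-arcs of J(n,k). -/
open SimpleGraph

variable {V : Type*}

/-- An `s`-geodesic of a graph: a sequence of `s+1` vertices, consecutively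
adjacent, whose endpoints are at distance `s`. -/
def SimpleGraph.IsNGeodesic (Γ : SimpleGraph V) (s : ℕ) (u : Fin (s + 1) → V) : Prop :=
  (∀ i : Fin s, Γ.Adj (u i.castSucc) (u i.succ)) ∧ Γ.dist (u 0) (u (Fin.last s)) = s

/-- `(G,s)`-geodesic transitivity: `G` is transitive on vertices and, for each
`1 ≤ i ≤ s`, the graph has an `i`-geodesic and `G` is transitive on `i`-geodesics. -/
def SimpleGraph.GeodesicTransitiveOn (Γ : SimpleGraph V) (G : Subgroup (Equiv.Perm V))
    (s : ℕ) : Prop :=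
  (∀ u v : V, ∃ g ∈ G, g u = v) ∧
  ∀ i : ℕ, 1 ≤ i → i ≤ s →
    (∃ u : Fin (i + 1) → V, Γ.IsNGeodesic i u) ∧
    ∀ u w : Fin (i + 1) → V, Γ.IsNGeodesic i u → Γ.IsNGeodesic i w →
      ∃ g ∈ G, ∀ j, g (u j) = w j

/-- The Johnson graph `J(n,k)`: vertices are the `k`-element subsets of an
`n`-element set, two of them adjacent iff their intersection has `k - 1` elements. -/
def johnsonGraph (n k : ℕ) : SimpleGraph {s : Finset (Fin n) // s.card = k} where
  Adj U W := U ≠ W ∧ (U.1 ∩ W.1).card = k - 1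
  symm := ⟨fun U W ⟨h1, h2⟩ => ⟨h1.symm, by rwa [Finset.inter_comm]⟩⟩
  loopless := ⟨fun U hU => hU.1 rfl⟩

/-!
In `J(n,k)` the distance between `U` and `W` is `#(U \ W)`. Hence along a geodesic
`U₀, …, Uᵢ₊₁` the point `a` leaving at the last step lies in every earlier vertex and the point
`b` entering lies in none of them. If a permutation `σ` of `Fin n` maps the first `i + 1` vertices
of one geodesic onto those of another, whose last step trades `a'` for `b'`, then the swaps
`σ a ↔ a'` and `σ b ↔ b'` fix those vertices of the second geodesic, so composing them with `σ`
matches the last vertices as well; permutations of `Fin n` act as automorphisms.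
On the other hand some `2`-arcs close a triangle while others have endpoints at distance `2`.
-/

open Finset

namespace Finset

theorem exists_perm_map_eq {α : Type*} {s t : Finset α} (h : #s = #t) :
    ∃ σ : Equiv.Perm α, s.map σ.toEmbedding = t := by
  classical
  let e : s ≃ t := equivOfCardEq h
  refine ⟨e.extendSubtype, eq_of_subset_of_card_le ?_ (by simp [h])⟩
  intro x hx
  obtain ⟨y, hy, rfl⟩ := mem_map.mp hx
  exact e.extendSubtype_mem y hy

variable {α : Type*} [DecidableEq α]

theorem inter_subset_and_subset_union_of_card_sdiff_eq_add {s t u : Finset α}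
    (h : #(s \ u) = #(s \ t) + #(t \ u)) : s ∩ u ⊆ t ∧ t ⊆ s ∪ u := by
  have hunion : s \ t ∪ t \ u = s \ u := by
    refine (eq_of_subset_of_card_le (sdiff_triangle s t u) ?_).symm
    exact h ▸ card_union_le _ _
  simp only [Finset.ext_iff, mem_union, mem_sdiff] at hunion
  exact ⟨fun x hx => by grind, fun x hx => by grind⟩

theorem map_swap_eq_self {a b : α} {s : Finset α} (h : a ∈ s ↔ b ∈ s) :
    s.map (Equiv.swap a b).toEmbedding = s := by
  ext x
  rw [mem_map_equiv, Equiv.symm_swap, Equiv.swap_apply_def]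
  split_ifs <;> simp_all

theorem map_swap_mul_swap_eq_self {a a' b b' : α} {s : Finset α} (ha : a ∈ s) (ha' : a' ∈ s)
    (hb : b ∉ s) (hb' : b' ∉ s) :
    s.map (Equiv.swap a a' * Equiv.swap b b').toEmbedding = s := by
  rw [Equiv.Perm.mul_def, Equiv.trans_toEmbedding, ← map_map,
    map_swap_eq_self (iff_of_false hb hb'), map_swap_eq_self (iff_of_true ha ha')]

theorem map_swap_mul_swap_insert_erase {a a' b b' : α} {s : Finset α} (ha : a ∈ s)
    (ha' : a' ∈ s) (hb : b ∉ s) (hb' : b' ∉ s) :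
    (insert b (s.erase a)).map (Equiv.swap a a' * Equiv.swap b b').toEmbedding
      = insert b' (s.erase a') := by
  have hne : ∀ {x y}, x ∈ s → y ∉ s → x ≠ y := fun hx hy h => hy (h ▸ hx)
  rw [map_insert, map_erase, map_swap_mul_swap_eq_self ha ha' hb hb']
  simp [Equiv.swap_apply_of_ne_of_ne (hne ha hb) (hne ha hb'),
    Equiv.swap_apply_of_ne_of_ne (hne ha hb').symm (hne ha' hb').symm]

end Finset

namespace SimpleGraph

variable {G : SimpleGraph V} {m : ℕ} {u : Fin (m + 1) → V}

theorem reachable_of_forall_adj_succ (hu : ∀ i : Fin m, G.Adj (u i.castSucc) (u i.succ))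
    (a b : Fin (m + 1)) : G.Reachable (u a) (u b) := by
  suffices h : ∀ a, G.Reachable (u 0) (u a) from (h a).symm.trans (h b)
  intro a
  induction a using Fin.induction with
  | zero => rfl
  | succ i ih => exact ih.trans (hu i).reachable

theorem dist_le_of_forall_adj_succ (hu : ∀ i : Fin m, G.Adj (u i.castSucc) (u i.succ))
    {a b : Fin (m + 1)} (hab : a ≤ b) : G.dist (u a) (u b) ≤ b - a := by
  induction b using Fin.induction with
  | zero => simp [Fin.le_zero_iff.mp hab]
  | succ i ih =>
    rcases hab.lt_or_eq with hlt | rfl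
    · have hdist := (hu i).reachable.dist_triangle_right (u a)
      rw [dist_eq_one_iff_adj.mpr (hu i)] at hdist
      have hai : (a : ℕ) ≤ i := Nat.lt_succ_iff.mp (by simpa [Fin.lt_def] using hlt)
      have := ih (Fin.le_castSucc_iff.mpr hlt)
      simp only [Fin.val_succ, Fin.val_castSucc] at this ⊢
      omega
    · simp

theorem IsNGeodesic.dist_eq (hu : G.IsNGeodesic m u) {a b : Fin (m + 1)} (hab : a ≤ b) :
    G.dist (u a) (u b) = b - a := by
  have h0a := dist_le_of_forall_adj_succ hu.1 (Fin.zero_le a)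
  have hab' := dist_le_of_forall_adj_succ hu.1 hab
  have hbm := dist_le_of_forall_adj_succ hu.1 (Fin.le_last b)
  have hreach := reachable_of_forall_adj_succ hu.1
  have htri := ((hreach 0 a).dist_triangle_left (u (Fin.last m))).trans
    (Nat.add_le_add_left ((hreach a b).dist_triangle_left _) _)
  have hbm' := Fin.le_last b
  rw [hu.2] at htri
  simp only [Fin.val_zero, Fin.val_last, Fin.le_def] at *
  omega

theorem IsNGeodesic.castLE (hu : G.IsNGeodesic m u) {i : ℕ} (hi : i ≤ m) :
    G.IsNGeodesic i (u ∘ Fin.castLE (Nat.succ_le_succ hi)) := by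
  refine ⟨fun j => ?_, ?_⟩
  · simpa using hu.1 (Fin.castLE hi j)
  · simpa using hu.dist_eq ((Fin.castLE_le_castLE_iff (Nat.succ_le_succ hi)).mpr
      (Fin.zero_le (Fin.last i)))

theorem Reachable.exists_isNGeodesic {v w : V} (h : G.Reachable v w) :
    ∃ u, G.IsNGeodesic (G.dist v w) u := by
  obtain ⟨p, hp⟩ := h.exists_walk_length_eq_dist
  refine ⟨fun j => p.getVert j, fun j => ?_, by simp [← hp]⟩
  simpa using p.adj_getVert_succ (by rw [hp]; exact j.isLt)

theorem not_two_arc_transitive_of_triangle_of_dist_eq_two {u₀ u₁ u₂ v₀ v₁ v₂ : V}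
    (hu₀₁ : G.Adj u₀ u₁) (hu₁₂ : G.Adj u₁ u₂) (hu₀₂ : G.Adj u₀ u₂)
    (hv₀₁ : G.Adj v₀ v₁) (hv₁₂ : G.Adj v₁ v₂) (hv₀₂ : G.dist v₀ v₂ = 2) :
    ¬ ∀ u₀ u₁ u₂ v₀ v₁ v₂ : V, (G.Adj u₀ u₁ ∧ G.Adj u₁ u₂ ∧ u₀ ≠ u₂) →
        (G.Adj v₀ v₁ ∧ G.Adj v₁ v₂ ∧ v₀ ≠ v₂) →
        ∃ g ∈ G.autGroup, g u₀ = v₀ ∧ g u₁ = v₁ ∧ g u₂ = v₂ := fun h => by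
  have hv₀₂_ne : v₀ ≠ v₂ := by rintro rfl; simp at hv₀₂
  obtain ⟨g, hg, rfl, -, rfl⟩ :=
    h u₀ u₁ u₂ v₀ v₁ v₂ ⟨hu₀₁, hu₁₂, hu₀₂.ne⟩ ⟨hv₀₁, hv₁₂, hv₀₂_ne⟩
  rw [dist_eq_one_iff_adj.mpr ((hg u₀ u₂).mpr hu₀₂)] at hv₀₂
  omega

end SimpleGraph

namespace JohnsonGraph

variable {n k : ℕ} {U W X : {s : Finset (Fin n) // s.card = k}}

theorem adj_iff : (johnsonGraph n k).Adj U W ↔ #(U.1 \ W.1) = 1 := by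
  have hcard := card_sdiff_add_card_inter U.1 W.1
  have heq : U = W ↔ #(U.1 \ W.1) = 0 := by
    rw [Subtype.ext_iff, card_eq_zero, sdiff_eq_empty_iff_subset,
      subset_iff_eq_of_card_le (by rw [U.2, W.2])]
  simp only [johnsonGraph, ne_eq, heq]
  omega

def exchange (U : {s : Finset (Fin n) // s.card = k}) {a b : Fin n} (ha : a ∈ U.1)
    (hb : b ∉ U.1) : {s : Finset (Fin n) // s.card = k} :=
  ⟨insert b (U.1.erase a), by
    rw [card_insert_of_notMem (mt mem_of_mem_erase hb), card_erase_of_mem ha, U.2,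
      Nat.sub_add_cancel (U.2 ▸ card_pos.mpr ⟨a, ha⟩)]⟩

theorem adj_exchange {a b : Fin n} (ha : a ∈ U.1) (hb : b ∉ U.1) :
    (johnsonGraph n k).Adj U (exchange U ha hb) := by
  rw [adj_iff, card_eq_one]
  exact ⟨a, by ext x; simp [exchange]; grind⟩

theorem exists_eq_exchange_of_adj (h : (johnsonGraph n k).Adj U W) :
    ∃ a b, ∃ (ha : a ∈ U.1) (hb : b ∉ U.1), W = exchange U ha hb := by
  have hUW := adj_iff.mp h
  obtain ⟨a, ha⟩ := card_eq_one.mp hUW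
  obtain ⟨b, hb⟩ := card_eq_one.mp ((card_sdiff_comm (by rw [U.2, W.2])).symm.trans hUW)
  have haU : a ∈ U.1 \ W.1 := ha ▸ mem_singleton_self a
  have hbW : b ∈ W.1 \ U.1 := hb ▸ mem_singleton_self b
  refine ⟨a, b, (mem_sdiff.mp haU).1, (mem_sdiff.mp hbW).2, Subtype.ext ?_⟩
  ext x
  have hxa := congrArg (x ∈ ·) ha
  have hxb := congrArg (x ∈ ·) hb
  simp only [exchange, mem_sdiff, mem_singleton, eq_iff_iff] at hxa hxb ⊢
  grind

theorem exists_walk_length_eq_card_sdiff (U W : {s : Finset (Fin n) // s.card = k}) :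
    ∃ p : (johnsonGraph n k).Walk U W, p.length = #(U.1 \ W.1) := by
  induction hd : #(U.1 \ W.1) generalizing U with
  | zero =>
    obtain rfl : U = W := Subtype.ext <| eq_of_subset_of_card_le
      (sdiff_eq_empty_iff_subset.mp (card_eq_zero.mp hd)) (by rw [U.2, W.2])
    exact ⟨.nil, rfl⟩
  | succ d ih =>
    obtain ⟨a, ha⟩ : (U.1 \ W.1).Nonempty := card_pos.mp (by omega)
    obtain ⟨b, hb⟩ : (W.1 \ U.1).Nonempty :=
      card_pos.mp (by rw [← card_sdiff_comm (by rw [U.2, W.2])]; omega)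
    rw [mem_sdiff] at ha hb
    have hX : #((exchange U ha.1 hb.2).1 \ W.1) = d := by
      have : (exchange U ha.1 hb.2).1 \ W.1 = (U.1 \ W.1).erase a := by
        ext x; simp [exchange]; grind
      rw [this, card_erase_of_mem (mem_sdiff.mpr ha), hd, Nat.add_sub_cancel]
    obtain ⟨p, hp⟩ := ih _ hX
    exact ⟨.cons (adj_exchange ha.1 hb.2) p, by simp [hp]⟩

theorem card_sdiff_le_length (p : (johnsonGraph n k).Walk U W) : #(U.1 \ W.1) ≤ p.length := by
  induction p with
  | nil => simp
  | @cons U X W h p ih =>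
    calc #(U.1 \ W.1) ≤ #(U.1 \ X.1 ∪ X.1 \ W.1) := card_le_card (sdiff_triangle _ _ _)
      _ ≤ #(U.1 \ X.1) + #(X.1 \ W.1) := card_union_le _ _
      _ ≤ (Walk.cons h p).length := by rw [adj_iff.mp h, Walk.length_cons]; omega

theorem dist_eq : (johnsonGraph n k).dist U W = #(U.1 \ W.1) := by
  obtain ⟨p, hp⟩ := exists_walk_length_eq_card_sdiff U W
  refine le_antisymm (hp ▸ dist_le p) ?_
  obtain ⟨q, hq⟩ := p.reachable.exists_walk_length_eq_dist
  exact hq ▸ card_sdiff_le_length q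

theorem preconnected : (johnsonGraph n k).Preconnected := fun U W =>
  ⟨(exists_walk_length_eq_card_sdiff U W).choose⟩

theorem exists_disjoint (h : 2 * k ≤ n) :
    ∃ U W : {s : Finset (Fin n) // s.card = k}, Disjoint U.1 W.1 := by
  obtain ⟨s, -, hs⟩ : ∃ s ⊆ (univ : Finset (Fin n)), #s = k :=
    exists_subset_card_eq (by simp; omega)
  obtain ⟨t, hts, ht⟩ : ∃ t ⊆ sᶜ, #t = k :=
    exists_subset_card_eq (by rw [card_compl, hs, Fintype.card_fin]; omega)
  exact ⟨⟨s, hs⟩, ⟨t, ht⟩, disjoint_of_subset_right hts disjoint_compl_right⟩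

theorem diam_eq (h : 2 * k ≤ n) : (johnsonGraph n k).diam = k := by
  obtain ⟨U, W, hUW⟩ := exists_disjoint h
  have : Nonempty {s : Finset (Fin n) // s.card = k} := ⟨U⟩
  have hconn : (johnsonGraph n k).Connected := ⟨preconnected⟩
  refine le_antisymm ?_ ?_
  · obtain ⟨U', W', h'⟩ := (johnsonGraph n k).exists_dist_eq_diam
    rw [← h', dist_eq]
    exact (card_le_card sdiff_subset).trans U'.2.le
  · calc k = (johnsonGraph n k).dist U W := by rw [dist_eq, hUW.sdiff_eq_left, U.2]
      _ ≤ _ := dist_le_diam (connected_iff_ediam_ne_top.mp hconn)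

theorem inter_subset_and_subset_union_of_dist_eq_add
    (h : (johnsonGraph n k).dist U X =
      (johnsonGraph n k).dist U W + (johnsonGraph n k).dist W X) :
    U.1 ∩ X.1 ⊆ W.1 ∧ W.1 ⊆ U.1 ∪ X.1 := by
  simp only [dist_eq] at h
  exact inter_subset_and_subset_union_of_card_sdiff_eq_add h

theorem IsNGeodesic.mem_and_notMem_of_last_eq_exchange {i : ℕ}
    {u : Fin (i + 2) → {s : Finset (Fin n) // s.card = k}}
    (hu : (johnsonGraph n k).IsNGeodesic (i + 1) u) {a b : Fin n}
    (ha : a ∈ (u (Fin.last i).castSucc).1) (hb : b ∉ (u (Fin.last i).castSucc).1)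
    (hlast : u (Fin.last (i + 1)) = exchange _ ha hb) (j : Fin (i + 1)) :
    a ∈ (u j.castSucc).1 ∧ b ∉ (u j.castSucc).1 := by
  have hj : j.castSucc ≤ (Fin.last i).castSucc := Fin.castSucc_le_castSucc_iff.mpr (Fin.le_last j)
  obtain ⟨hinter, hunion⟩ := inter_subset_and_subset_union_of_dist_eq_add
    (U := u j.castSucc) (W := u (Fin.last i).castSucc) (X := u (Fin.last (i + 1))) (by
      rw [hu.dist_eq (Fin.le_last _), hu.dist_eq hj, hu.dist_eq (Fin.le_last _)]
      simp only [Fin.val_last, Fin.val_castSucc]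
      omega)
  rw [hlast] at hinter hunion
  constructor
  · have := hunion ha
    simp only [exchange, mem_union, mem_insert, mem_erase] at this
    grind
  · intro hbj
    exact hb (hinter (mem_inter.mpr ⟨hbj, mem_insert_self _ _⟩))

def liftPerm : Equiv.Perm (Fin n) →* Equiv.Perm {s : Finset (Fin n) // s.card = k} where
  toFun σ := σ.finsetCongr.subtypeEquiv fun s => by simp [Equiv.finsetCongr_apply]
  map_one' := by ext; simp [Equiv.finsetCongr_apply, ← Equiv.Perm.inv_def]
  map_mul' σ τ := by ext; simp [Equiv.finsetCongr_apply, ← Equiv.Perm.inv_def]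

theorem coe_liftPerm_apply (σ : Equiv.Perm (Fin n)) (U : {s : Finset (Fin n) // s.card = k}) :
    (liftPerm σ U).1 = U.1.map σ.toEmbedding := rfl

theorem liftPerm_mem_autGroup (σ : Equiv.Perm (Fin n)) :
    liftPerm σ ∈ (johnsonGraph n k).autGroup := fun U W => by
  rw [adj_iff, adj_iff, coe_liftPerm_apply, coe_liftPerm_apply, ← Finset.map_sdiff, card_map]

theorem exists_liftPerm_apply_eq (U W : {s : Finset (Fin n) // s.card = k}) :
    ∃ σ : Equiv.Perm (Fin n), liftPerm σ U = W := by
  obtain ⟨σ, hσ⟩ := exists_perm_map_eq (U.2.trans W.2.symm)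
  exact ⟨σ, Subtype.ext hσ⟩

theorem liftPerm_exchange (σ : Equiv.Perm (Fin n)) (U : {s : Finset (Fin n) // s.card = k})
    {a b : Fin n} (ha : a ∈ U.1) (hb : b ∉ U.1) :
    (liftPerm σ (exchange U ha hb)).1 = insert (σ b) ((liftPerm σ U).1.erase (σ a)) := by
  simp [coe_liftPerm_apply, exchange, map_insert, map_erase]

theorem exists_liftPerm_of_isNGeodesic {i : ℕ}
    {u w : Fin (i + 1) → {s : Finset (Fin n) // s.card = k}}
    (hu : (johnsonGraph n k).IsNGeodesic i u) (hw : (johnsonGraph n k).IsNGeodesic i w) :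
    ∃ σ : Equiv.Perm (Fin n), ∀ j, liftPerm σ (u j) = w j := by
  induction i with
  | zero =>
    obtain ⟨σ, hσ⟩ := exists_liftPerm_apply_eq (u 0) (w 0)
    exact ⟨σ, fun j => by rwa [Fin.fin_one_eq_zero j]⟩
  | succ i ih =>
    obtain ⟨σ, hσ⟩ : ∃ σ : Equiv.Perm (Fin n), ∀ j : Fin (i + 1),
        liftPerm σ (u j.castSucc) = w j.castSucc :=
      ih (hu.castLE (Nat.le_succ i)) (hw.castLE (Nat.le_succ i))
    obtain ⟨a, b, ha, hb, hu_last⟩ := exists_eq_exchange_of_adj (hu.1 (Fin.last i))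
    obtain ⟨a', b', ha', hb', hw_last⟩ := exists_eq_exchange_of_adj (hw.1 (Fin.last i))
    have hu_mem := IsNGeodesic.mem_and_notMem_of_last_eq_exchange hu ha hb hu_last
    have hw_mem := IsNGeodesic.mem_and_notMem_of_last_eq_exchange hw ha' hb' hw_last
    have hσ_mem : ∀ j : Fin (i + 1), σ a ∈ (w j.castSucc).1 ∧ σ b ∉ (w j.castSucc).1 := by
      intro j
      rw [← hσ j]
      simpa [coe_liftPerm_apply] using hu_mem j
    refine ⟨Equiv.swap (σ a) a' * Equiv.swap (σ b) b' * σ, Fin.lastCases ?_ fun j => ?_⟩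
    · rw [Fin.succ_last] at hu_last hw_last
      rw [map_mul, Equiv.Perm.mul_apply, hu_last, hw_last]
      refine Subtype.ext ?_
      rw [coe_liftPerm_apply, liftPerm_exchange, hσ (Fin.last i)]
      exact map_swap_mul_swap_insert_erase (hσ_mem _).1 ha' (hσ_mem _).2 hb'
    · rw [map_mul, Equiv.Perm.mul_apply, hσ j]
      exact Subtype.ext <|
        map_swap_mul_swap_eq_self (hσ_mem j).1 (hw_mem j).1 (hσ_mem j).2 (hw_mem j).2

theorem exists_triangle_and_geodesic (hk : 2 ≤ k) (hkn : k + 2 ≤ n) :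
    ∃ U₀ U₁ U₂ W₂ : {s : Finset (Fin n) // s.card = k},
      (johnsonGraph n k).Adj U₀ U₁ ∧ (johnsonGraph n k).Adj U₁ U₂ ∧
      (johnsonGraph n k).Adj U₀ U₂ ∧ (johnsonGraph n k).Adj U₁ W₂ ∧
      (johnsonGraph n k).dist U₀ W₂ = 2 := by
  obtain ⟨U, -, hU⟩ : ∃ U ⊆ (univ : Finset (Fin n)), #U = k :=
    exists_subset_card_eq (by simp; omega)
  obtain ⟨a, ha, b, hb, hab⟩ := one_lt_card.mp (by omega : 1 < #U)
  obtain ⟨c, hc, d, hd, hcd⟩ :=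
    one_lt_card.mp (by rw [card_compl, hU, Fintype.card_fin]; omega : 1 < #Uᶜ)
  rw [mem_compl] at hc hd
  let U₁ := exchange ⟨U, hU⟩ ha hc
  have hcU₁ : c ∈ U₁.1 := mem_insert_self c _
  have hbU₁ : b ∈ U₁.1 := mem_insert_of_mem (mem_erase.mpr ⟨hab.symm, hb⟩)
  have hdU₁ : d ∉ U₁.1 := by simp [U₁, exchange, hd, hcd.symm]
  refine ⟨⟨U, hU⟩, U₁, exchange U₁ hcU₁ hdU₁, exchange U₁ hbU₁ hdU₁, adj_exchange ha hc,
    adj_exchange hcU₁ hdU₁, adj_iff.mpr (card_eq_one.mpr ⟨a, ?_⟩), adj_exchange hbU₁ hdU₁,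
    dist_eq.trans (card_eq_two.mpr ⟨a, b, hab, ?_⟩)⟩
  all_goals ext x; simp [U₁, exchange]; grind

theorem exists_isNGeodesic (h : 2 * k ≤ n) {i : ℕ} (hi : i ≤ k) :
    ∃ u : Fin (i + 1) → {s : Finset (Fin n) // s.card = k}, (johnsonGraph n k).IsNGeodesic i u := by
  obtain ⟨U, W, hUW⟩ := exists_disjoint h
  obtain ⟨u, hu⟩ := (preconnected U W).exists_isNGeodesic
  exact ⟨_, hu.castLE (by rwa [dist_eq, hUW.sdiff_eq_left, U.2])⟩

end JohnsonGraph

open JohnsonGraph in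
/-- For `2 ≤ k ≤ n - k`, the Johnson graph `J(n,k)` has diameter
`k` and is geodesic transitive, but its automorphism group is not transitive on the
set of `2`-arcs. -/
theorem johnson_geodesic_transitive_not_two_arc (n k : ℕ) (hk : 2 ≤ k) (hkn : k ≤ n - k) :
    (johnsonGraph n k).diam = k ∧
    (johnsonGraph n k).GeodesicTransitiveOn (johnsonGraph n k).autGroup k ∧
    ¬ ∀ u₀ u₁ u₂ v₀ v₁ v₂ : {s : Finset (Fin n) // s.card = k},
        ((johnsonGraph n k).Adj u₀ u₁ ∧ (johnsonGraph n k).Adj u₁ u₂ ∧ u₀ ≠ u₂) →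
        ((johnsonGraph n k).Adj v₀ v₁ ∧ (johnsonGraph n k).Adj v₁ v₂ ∧ v₀ ≠ v₂) →
        ∃ g ∈ (johnsonGraph n k).autGroup, g u₀ = v₀ ∧ g u₁ = v₁ ∧ g u₂ = v₂ := by
  have h2k : 2 * k ≤ n := by omega
  refine ⟨diam_eq h2k, ⟨fun U W => ?_, fun i _ hi => ⟨exists_isNGeodesic h2k hi, ?_⟩⟩, ?_⟩
  · obtain ⟨σ, hσ⟩ := exists_liftPerm_apply_eq U W
    exact ⟨_, liftPerm_mem_autGroup σ, hσ⟩
  · intro u w hu hw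
    obtain ⟨σ, hσ⟩ := exists_liftPerm_of_isNGeodesic hu hw
    exact ⟨_, liftPerm_mem_autGroup σ, hσ⟩
  · obtain ⟨U₀, U₁, U₂, W₂, h₀₁, h₁₂, h₀₂, h₁₂', h₀₂'⟩ :=
      exists_triangle_and_geodesic (n := n) hk (by omega)
    exact not_two_arc_transitive_of_triangle_of_dist_eq_two h₀₁ h₁₂ h₀₂ h₀₁ h₁₂' h₀₂'
end

section
/- Let k ≥ 2 be an integer. Then the Odd graph O_k is geodesic transitive and 3-arc transitive: Aut(O_k) acts transitively on the vertices of O_k, on the set of i-geodesics of O_k for every 1 ≤ i ≤ diam(O_k) = k, and on the set of 3-arcs of O_k. -/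
open SimpleGraph

variable {V : Type*}

/-- The Odd graph `O_k`: vertices are the `k`-element subsets of a `(2k+1)`-element
set, two of them adjacent iff they are disjoint. -/
def oddGraph (k : ℕ) : SimpleGraph {s : Finset (Fin (2 * k + 1)) // s.card = k} where
  Adj U W := U ≠ W ∧ Disjoint U.1 W.1
  symm := ⟨fun U W ⟨h1, h2⟩ => ⟨h1.symm, h2.symm⟩⟩
  loopless := ⟨fun U hU => hU.1 rfl⟩

/-!
`Sym(2k+1)` acts on `O_k` by automorphisms, and two vertices meeting in `s` points are at
distance `min (2 (k - s)) (2 s + 1)`. The two ends of an edge miss exactly one point `x` of the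
ground set, and an edge from `A` ends at `(A ∪ {x})ᶜ`; so a walk is determined by its first vertex
and the sequence of missed points. Along a geodesic, and along a 3-arc, these
points lie alternately outside and inside the first vertex (for geodesics this is forced by the
distance formula), which makes them pairwise distinct. Any two such sequences of the same length
are related by a permutation of the ground set preserving the first vertices, and that
permutation carries one walk onto the other.
-/

namespace SimpleGraph

variable {G : SimpleGraph V} {v : ℕ → V} {n : ℕ}

theorem isNGeodesic_iff_forall_adj :
    G.IsNGeodesic n (fun j => v j) ↔
      (∀ j < n, G.Adj (v j) (v (j + 1))) ∧ G.dist (v 0) (v n) = n :=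
  ⟨fun h => ⟨fun j hj => h.1 ⟨j, hj⟩, h.2⟩, fun h => ⟨fun j => h.1 j j.2, h.2⟩⟩

theorem Connected.dist_le_sub_of_forall_adj (hG : G.Connected)
    (hv : ∀ j < n, G.Adj (v j) (v (j + 1))) {a b : ℕ} (hab : a ≤ b) (hbn : b ≤ n) :
    G.dist (v a) (v b) ≤ b - a := by
  induction b, hab using Nat.le_induction with
  | base => simp
  | succ b hab ih =>
    have hstep := (dist_eq_one_iff_adj.mpr (hv b (by omega))).le
    have := hG.dist_triangle (u := v a) (v := v b) (w := v (b + 1))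
    have := ih (by omega)
    omega

theorem Connected.dist_eq_of_forall_adj (hG : G.Connected)
    (hv : ∀ j < n, G.Adj (v j) (v (j + 1))) (hn : G.dist (v 0) (v n) = n) {j : ℕ} (hj : j ≤ n) :
    G.dist (v 0) (v j) = j := by
  have h₁ := hG.dist_le_sub_of_forall_adj hv (Nat.zero_le j) hj
  have h₂ := hG.dist_le_sub_of_forall_adj hv hj le_rfl
  have h₃ := hG.dist_triangle (u := v 0) (v := v j) (w := v n)
  omega

theorem Connected.exists_isNGeodesic (hG : G.Connected) {a b : V} (hn : n ≤ G.dist a b) :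
    ∃ u, G.IsNGeodesic n u := by
  obtain ⟨p, hp⟩ := hG.exists_walk_length_eq_dist a b
  have hv : ∀ j < G.dist a b, G.Adj (p.getVert j) (p.getVert (j + 1)) :=
    fun j hj => p.adj_getVert_succ (hp ▸ hj)
  have hd : G.dist (p.getVert 0) (p.getVert (G.dist a b)) = G.dist a b := by
    rw [p.getVert_zero, ← hp, p.getVert_length, hp]
  exact ⟨_, isNGeodesic_iff_forall_adj.mpr
    ⟨fun j hj => hv j (by omega), hG.dist_eq_of_forall_adj hv hd hn⟩⟩

end SimpleGraph

open Finset Function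
open scoped Pointwise

theorem Finset.smul_finset_compl {G α : Type*} [Group G] [MulAction G α] [Fintype α]
    [DecidableEq α] (g : G) (s : Finset α) : g • sᶜ = (g • s)ᶜ := by
  rw [compl_eq_univ_sdiff, compl_eq_univ_sdiff, smul_finset_sdiff, smul_finset_univ]

namespace Equiv.Perm

variable {α : Type*} [DecidableEq α] {s t : Finset α}

theorem exists_smul_finset_eq (hst : #s = #t) : ∃ σ : Perm α, σ • s = t := by
  obtain ⟨σ, hσ⟩ := exists_map_finset_eq s t hst
  exact ⟨σ, by rw [← hσ, smul_finset_def, map_eq_image]; rfl⟩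

/-- First move `s` onto `t`, then permute `t` and its complement separately. -/
theorem exists_smul_finset_eq_and_apply_eq [Fintype α] {ι : Type*} [Finite ι] (hst : #s = #t)
    {x y : ι → α} (hx : Injective x) (hy : Injective y) (hxy : ∀ i, x i ∈ s ↔ y i ∈ t) :
    ∃ σ : Perm α, σ • s = t ∧ ∀ i, σ (x i) = y i := by
  obtain ⟨τ, hτ⟩ := exists_smul_finset_eq hst
  have hmem (i : ι) : τ (x i) ∈ t ↔ y i ∈ t := by
    rw [← hxy, ← hτ]
    exact smul_mem_smul_finset_iff τ
  obtain ⟨π₁, h₁⟩ := exists_extending_pair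
    (fun i : {i // y i ∈ t} => (⟨τ (x i), (hmem i).2 i.2⟩ : {a // a ∈ t}))
    (fun i => ⟨y i, i.2⟩) (fun i j h => Subtype.ext (hx (τ.injective (congrArg Subtype.val h))))
    (fun i j h => Subtype.ext (hy (congrArg Subtype.val h)))
  obtain ⟨π₂, h₂⟩ := exists_extending_pair
    (fun i : {i // y i ∉ t} => (⟨τ (x i), mt (hmem i).1 i.2⟩ : {a // a ∉ t}))
    (fun i => ⟨y i, i.2⟩) (fun i j h => Subtype.ext (hx (τ.injective (congrArg Subtype.val h))))
    (fun i j h => Subtype.ext (hy (congrArg Subtype.val h)))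
  have hπt : π₁.subtypeCongr π₂ • t = t := by
    refine eq_of_subset_of_card_le (fun b hb => ?_) (card_smul_finset _ _).ge
    obtain ⟨a, ha, rfl⟩ := mem_smul_finset.mp hb
    rw [Perm.smul_def, subtypeCongr.left_apply _ _ ha]
    exact (π₁ ⟨a, ha⟩).2
  refine ⟨π₁.subtypeCongr π₂ * τ, by rw [mul_smul, hτ, hπt], fun i => ?_⟩
  rw [mul_apply]
  by_cases hi : y i ∈ t
  · rw [subtypeCongr.left_apply _ _ ((hmem i).2 hi)]
    exact congrArg Subtype.val (h₁ ⟨i, hi⟩)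
  · rw [subtypeCongr.right_apply _ _ (mt (hmem i).1 hi)]
    exact congrArg Subtype.val (h₂ ⟨i, hi⟩)

end Equiv.Perm

abbrev OddVertex (k : ℕ) := {s : Finset (Fin (2 * k + 1)) // s.card = k}

/-- The distance in `O_k` between two vertices meeting in `s` points: a walk of even length
exchanges at most one point every two steps, one of odd length ends on the complementary side. -/
def oddDist (k s : ℕ) : ℕ := min (2 * (k - s)) (2 * s + 1)

namespace OddVertex

variable {k : ℕ} {A B C U W : OddVertex k} {x y : Fin (2 * k + 1)}

theorem card_compl (U : OddVertex k) : #U.1ᶜ = k + 1 := by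
  rw [Finset.card_compl, U.2, Fintype.card_fin]
  omega

theorem card_compl_insert (U : OddVertex k) (hx : x ∉ U.1) : #(insert x U.1)ᶜ = k := by
  rw [Finset.card_compl, card_insert_of_notMem hx, U.2, Fintype.card_fin]
  omega

theorem card_inter_le (U W : OddVertex k) : #(U.1 ∩ W.1) ≤ k :=
  (card_le_card inter_subset_left).trans_eq U.2

theorem exists_card_inter_eq {s : ℕ} (hs : s ≤ k) : ∃ U W : OddVertex k, #(U.1 ∩ W.1) = s := by
  obtain ⟨U, -, hU⟩ := exists_subset_card_eq (s := (univ : Finset (Fin (2 * k + 1)))) (n := k)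
    (by rw [card_univ, Fintype.card_fin]; omega)
  obtain ⟨S, hSU, hS⟩ := exists_subset_card_eq (s := U) (n := s) (by omega)
  obtain ⟨T, hTU, hT⟩ := exists_subset_card_eq (s := Uᶜ) (n := k - s) (by
    rw [Finset.card_compl, hU, Fintype.card_fin]; omega)
  have hUT : Disjoint U T := disjoint_of_subset_right hTU disjoint_compl_right
  refine ⟨⟨U, hU⟩, ⟨S ∪ T, ?_⟩, ?_⟩
  · rw [card_union_of_disjoint (disjoint_of_subset_left hSU hUT), hS, hT]
    omega
  · rw [inter_union_distrib_left, inter_eq_right.mpr hSU, disjoint_iff_inter_eq_empty.mp hUT,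
      union_empty, hS]

theorem notMem_of_eq_compl_insert (hB : B.1 = (insert x A.1)ᶜ) : x ∉ A.1 := by
  intro hx
  have hcard := B.2
  rw [hB, insert_eq_of_mem hx, card_compl] at hcard
  omega

/-- `A`, `B` and `{x}` partition the ground set. -/
theorem card_inter_add_card_inter (hB : B.1 = (insert x A.1)ᶜ) (Z : OddVertex k) :
    #(Z.1 ∩ B.1) + #(Z.1 ∩ A.1) + (if x ∈ Z.1 then 1 else 0) = k := by
  have hx := notMem_of_eq_compl_insert hB
  have hsplit := card_inter_add_card_sdiff Z.1 (insert x A.1)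
  rw [sdiff_eq_inter_compl, ← hB, Z.2] at hsplit
  by_cases hxZ : x ∈ Z.1
  · rw [inter_insert_of_mem hxZ, card_insert_of_notMem (fun h => hx (mem_inter.mp h).2)] at hsplit
    simp only [hxZ, if_true]
    omega
  · rw [inter_insert_of_notMem hxZ] at hsplit
    simp only [hxZ, if_false]
    omega

theorem exists_eq_compl_insert_of_adj (h : (oddGraph k).Adj A B) :
    ∃ x, B.1 = (insert x A.1)ᶜ := by
  have hsub : B.1 ⊆ A.1ᶜ := fun b hb => mem_compl.mpr fun ha => disjoint_left.mp h.2 ha hb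
  obtain ⟨x, hx⟩ : ∃ x, A.1ᶜ \ B.1 = {x} := card_eq_one.mp <| by
    rw [card_sdiff_of_subset hsub, card_compl, B.2]
    omega
  refine ⟨x, ?_⟩
  rw [compl_insert, ← sdiff_singleton_eq_erase, ← hx, Finset.sdiff_sdiff_eq_self hsub]

theorem adj_of_eq_compl_insert (hk : k ≠ 0) (hB : B.1 = (insert x A.1)ᶜ) :
    (oddGraph k).Adj A B := by
  have hdisj : Disjoint A.1 B.1 := by
    rw [hB, disjoint_compl_right_iff]
    exact subset_insert x A.1
  refine ⟨fun hAB => hk ?_, hdisj⟩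
  rw [← A.2, card_eq_zero, ← disjoint_self_iff_empty]
  exact hAB ▸ hdisj

theorem mem_of_eq_compl_insert_of_ne (hB : B.1 = (insert x A.1)ᶜ) (hC : C.1 = (insert y B.1)ᶜ)
    (hAC : A ≠ C) : y ∈ A.1 := by
  have hy := notMem_of_eq_compl_insert hC
  rw [hB, mem_compl, not_not, mem_insert] at hy
  refine hy.resolve_left fun hxy => hAC (Subtype.ext ?_)
  subst hxy
  have hx := notMem_of_eq_compl_insert hB
  ext c
  rw [hC, hB]
  by_cases hc : c = y <;> simp_all

theorem oddDist_le_length {U W : OddVertex k} (p : (oddGraph k).Walk U W) :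
    oddDist k #(W.1 ∩ U.1) ≤ p.length := by
  induction p with
  | @nil U => simp [oddDist, U.2]
  | @cons A B W h p ih =>
    obtain ⟨x, hB⟩ := exists_eq_compl_insert_of_adj h
    have hsum := card_inter_add_card_inter hB W
    have := card_inter_le W A
    have := card_inter_le W B
    rw [SimpleGraph.Walk.length_cons]
    simp only [oddDist] at ih ⊢
    split_ifs at hsum <;> omega

theorem exists_adj_oddDist_lt (hUW : U ≠ W) :
    ∃ B, (oddGraph k).Adj U B ∧ oddDist k #(W.1 ∩ B.1) < oddDist k #(W.1 ∩ U.1) := by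
  set s := #(W.1 ∩ U.1)
  have hk : k ≠ 0 := by
    rintro rfl
    exact hUW (Subtype.ext ((card_eq_zero.mp U.2).trans (card_eq_zero.mp W.2).symm))
  obtain ⟨x, hxU, hxW⟩ : ∃ x, x ∉ U.1 ∧ (x ∈ W.1 ↔ 2 * (k - s) ≤ 2 * s + 1) := by
    by_cases hcase : 2 * (k - s) ≤ 2 * s + 1
    · have : ¬ W.1 ⊆ U.1 := fun h =>
        hUW (Subtype.ext (eq_of_subset_of_card_le h (by rw [U.2, W.2])).symm)
      obtain ⟨x, hxW, hxU⟩ := not_subset.mp this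
      exact ⟨x, hxU, iff_of_true hxW hcase⟩
    · have hcard : #(U.1 ∪ W.1) < #(univ : Finset (Fin (2 * k + 1))) := by
        have := card_union_le U.1 W.1
        rw [card_univ, Fintype.card_fin, U.2, W.2] at *
        omega
      obtain ⟨x, -, hx⟩ := exists_mem_notMem_of_card_lt_card hcard
      rw [mem_union, not_or] at hx
      exact ⟨x, hx.1, iff_of_false hx.2 hcase⟩
  set B : OddVertex k := ⟨(insert x U.1)ᶜ, card_compl_insert U hxU⟩
  have hsum := card_inter_add_card_inter (A := U) (B := B) rfl W
  have := card_inter_le W U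
  refine ⟨B, adj_of_eq_compl_insert hk rfl, ?_⟩
  simp only [oddDist]
  by_cases hx : x ∈ W.1
  · rw [if_pos hx] at hsum
    have := hxW.mp hx
    omega
  · rw [if_neg hx] at hsum
    have := mt hxW.mpr hx
    omega

theorem exists_walk_length_le (U W : OddVertex k) :
    ∃ p : (oddGraph k).Walk U W, p.length ≤ oddDist k #(W.1 ∩ U.1) := by
  by_cases hUW : U = W
  · subst hUW
    exact ⟨.nil, Nat.zero_le _⟩
  obtain ⟨B, hUB, hB⟩ := exists_adj_oddDist_lt hUW
  obtain ⟨p, hp⟩ := exists_walk_length_le B W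
  exact ⟨.cons hUB p, by rw [SimpleGraph.Walk.length_cons]; omega⟩
termination_by oddDist k #(W.1 ∩ U.1)

def perm (σ : Equiv.Perm (Fin (2 * k + 1))) : Equiv.Perm (OddVertex k) :=
  (MulAction.toPerm σ : Equiv.Perm (Finset (Fin (2 * k + 1)))).subtypeEquiv fun s => by
    rw [MulAction.toPerm_apply, card_smul_finset]

theorem perm_apply_coe (σ : Equiv.Perm (Fin (2 * k + 1))) (U : OddVertex k) :
    (perm σ U).1 = σ • U.1 := rfl

theorem perm_mem_autGroup (σ : Equiv.Perm (Fin (2 * k + 1))) :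
    perm σ ∈ (oddGraph k).autGroup := fun U W =>
  and_congr (perm σ).injective.ne_iff <| by
    rw [perm_apply_coe, perm_apply_coe, smul_finset_def, smul_finset_def]
    exact disjoint_image (MulAction.injective σ)

end OddVertex

open OddVertex

theorem oddGraph_connected (k : ℕ) : (oddGraph k).Connected := by
  obtain ⟨U, -, -⟩ := exists_card_inter_eq (Nat.zero_le k)
  have : Nonempty (OddVertex k) := ⟨U⟩
  exact ⟨fun U W => (exists_walk_length_le U W).choose.reachable⟩

theorem oddGraph_dist {k : ℕ} (U W : OddVertex k) :
    (oddGraph k).dist U W = oddDist k #(U.1 ∩ W.1) := by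
  obtain ⟨p, hp⟩ := exists_walk_length_le U W
  obtain ⟨q, hq⟩ := (oddGraph_connected k).exists_walk_length_eq_dist U W
  rw [inter_comm]
  exact le_antisymm ((SimpleGraph.dist_le p).trans hp) (hq ▸ oddDist_le_length q)

theorem oddGraph_exists_dist_eq (k : ℕ) : ∃ U W : OddVertex k, (oddGraph k).dist U W = k := by
  obtain ⟨U, W, hUW⟩ := exists_card_inter_eq (Nat.div_le_self k 2)
  refine ⟨U, W, ?_⟩
  rw [oddGraph_dist, hUW, oddDist]
  omega

theorem oddGraph_diam (k : ℕ) : (oddGraph k).diam = k := by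
  have hG := oddGraph_connected k
  have := hG.nonempty
  have hfin := SimpleGraph.connected_iff_ediam_ne_top.mp hG
  refine le_antisymm ?_ ?_
  · obtain ⟨U, W, hUW⟩ := (oddGraph k).exists_dist_eq_diam
    have := card_inter_le U W
    rw [← hUW, oddGraph_dist, oddDist]
    omega
  · obtain ⟨U, W, hUW⟩ := oddGraph_exists_dist_eq k
    exact hUW.symm.le.trans (SimpleGraph.dist_le_diam hfin)

theorem oddGraph_vertex_transitive {k : ℕ} (U W : OddVertex k) :
    ∃ g ∈ (oddGraph k).autGroup, g U = W := by
  obtain ⟨σ, hσ⟩ := Equiv.Perm.exists_smul_finset_eq (U.2.trans W.2.symm)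
  exact ⟨perm σ, perm_mem_autGroup σ, Subtype.ext hσ⟩

namespace OddVertex

variable {k : ℕ} {A B U : OddVertex k} {x : Fin (2 * k + 1)} {i : ℕ}

theorem mem_iff_odd_of_dist (hB : B.1 = (insert x A.1)ᶜ) (hA : (oddGraph k).dist U A = i)
    (hB' : (oddGraph k).dist U B = i + 1) : x ∈ U.1 ↔ Odd i := by
  have hsum := card_inter_add_card_inter hB U
  have := card_inter_le U A
  rw [oddGraph_dist] at hA hB'
  simp only [oddDist] at hA hB'
  rw [Nat.odd_iff]
  by_cases hx : x ∈ U.1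
  · rw [if_pos hx] at hsum
    simp only [hx, true_iff]
    omega
  · rw [if_neg hx] at hsum
    simp only [hx, false_iff]
    omega

/-- `x j` is the point missed by the edge from `v j` to `v (j + 1)`. -/
def IsAlternatingWalk (n : ℕ) (v : ℕ → OddVertex k) (x : ℕ → Fin (2 * k + 1)) : Prop :=
  ∀ j < n, (v (j + 1)).1 = (insert (x j) (v j).1)ᶜ ∧ (x j ∈ (v 0).1 ↔ Odd j)

namespace IsAlternatingWalk

variable {n : ℕ} {v w : ℕ → OddVertex k} {x y : ℕ → Fin (2 * k + 1)}

/-- A point breaking the alternation between times `j` and `j + 1` lies in neither `v j` nor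
`v (j + 1)`, so it is `x j`, whose parity forbids this. -/
theorem mem_iff_of_le (hv : IsAlternatingWalk n v x) {c : Fin (2 * k + 1)} {m : ℕ} (hm : m ≤ n)
    (hc : c ∈ (v m).1 ↔ (c ∈ (v 0).1 ↔ Even m)) {j : ℕ} (hj : j ≤ m) :
    c ∈ (v j).1 ↔ (c ∈ (v 0).1 ↔ Even j) := by
  induction m with
  | zero => rwa [Nat.le_zero.mp hj]
  | succ m ih =>
    rcases hj.lt_or_eq with hj | rfl
    · refine ih (by omega) ?_ (by omega)
      obtain ⟨hstep, hparity⟩ := hv m (by omega)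
      rw [hstep, mem_compl, mem_insert, Nat.even_add_one] at hc
      rw [← Nat.not_even_iff_odd] at hparity
      by_cases hcx : c = x m
      · subst hcx
        tauto
      · tauto
    · exact hc

theorem injOn (hv : IsAlternatingWalk n v x) : Set.InjOn x (Set.Iio n) := by
  suffices ∀ a b, a < b → b < n → x a ≠ x b by
    intro a ha b hb hab
    by_contra hne
    rcases lt_or_gt_of_ne hne with h | h
    · exact this a b h hb hab
    · exact this b a h ha hab.symm
  intro a b hab hb hx
  obtain ⟨hstep_b, hparity_b⟩ := hv b hb
  have hout_b := notMem_of_eq_compl_insert hstep_b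
  have halt (j) (hj : j ≤ b) := hv.mem_iff_of_le (c := x b) hb.le (by
    rw [← Nat.not_even_iff_odd] at hparity_b
    tauto) hj
  have ha := halt a hab.le
  have ha' := halt (a + 1) hab
  rw [(hv a (by omega)).1, mem_compl, mem_insert, Nat.even_add_one] at ha'
  have hout_a := notMem_of_eq_compl_insert (hv a (by omega)).1
  rw [hx] at hout_a
  tauto

theorem exists_perm (hv : IsAlternatingWalk n v x) (hw : IsAlternatingWalk n w y) :
    ∃ σ : Equiv.Perm (Fin (2 * k + 1)), ∀ j ≤ n, σ • (v j).1 = (w j).1 := by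
  obtain ⟨σ, h0, hσ⟩ := Equiv.Perm.exists_smul_finset_eq_and_apply_eq
    ((v 0).2.trans (w 0).2.symm) (Set.injOn_iff_injective.mp hv.injOn)
    (Set.injOn_iff_injective.mp hw.injOn)
    (fun j : Set.Iio n => (hv j j.2).2.trans (hw j j.2).2.symm)
  refine ⟨σ, fun j hj => ?_⟩
  induction j with
  | zero => exact h0
  | succ j ih =>
    rw [(hv j hj).1, (hw j hj).1, smul_finset_compl, smul_finset_insert, ih (by omega),
      Equiv.Perm.smul_def]
    exact congrArg (fun a => (insert a (w j).1)ᶜ) (hσ ⟨j, hj⟩)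

end IsAlternatingWalk

end OddVertex

theorem oddGraph_exists_isAlternatingWalk_of_isNGeodesic {k n : ℕ} {v : ℕ → OddVertex k}
    (hv : (oddGraph k).IsNGeodesic n (fun j => v j)) : ∃ x, IsAlternatingWalk n v x := by
  obtain ⟨hadj, hdist⟩ := SimpleGraph.isNGeodesic_iff_forall_adj.mp hv
  choose! x hx using fun j (hj : j < n) => exists_eq_compl_insert_of_adj (hadj j hj)
  have hd (j) (hj : j ≤ n) := (oddGraph_connected k).dist_eq_of_forall_adj hadj hdist hj
  exact ⟨x, fun j hj => ⟨hx j hj, mem_iff_odd_of_dist (hx j hj) (hd j hj.le) (hd (j + 1) hj)⟩⟩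

theorem oddGraph_isNGeodesic_transitive {k n : ℕ} {u w : Fin (n + 1) → OddVertex k}
    (hu : (oddGraph k).IsNGeodesic n u) (hw : (oddGraph k).IsNGeodesic n w) :
    ∃ g ∈ (oddGraph k).autGroup, ∀ j, g (u j) = w j := by
  have hseq (f : Fin (n + 1) → OddVertex k) :
      ∃ v : ℕ → OddVertex k, f = fun j : Fin (n + 1) => v j :=
    ⟨fun m => f (Fin.clamp m n),
      funext fun j : Fin (n + 1) => congrArg f (Fin.ext (min_eq_left j.is_le).symm)⟩
  obtain ⟨u, rfl⟩ := hseq u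
  obtain ⟨w, rfl⟩ := hseq w
  obtain ⟨x, hx⟩ := oddGraph_exists_isAlternatingWalk_of_isNGeodesic hu
  obtain ⟨y, hy⟩ := oddGraph_exists_isAlternatingWalk_of_isNGeodesic hw
  obtain ⟨σ, hσ⟩ := hx.exists_perm hy
  exact ⟨perm σ, perm_mem_autGroup σ, fun j => Subtype.ext (hσ j j.is_le)⟩

theorem oddGraph_exists_isAlternatingWalk_of_threeArc {k : ℕ} {u₀ u₁ u₂ u₃ : OddVertex k}
    (h : (oddGraph k).Adj u₀ u₁ ∧ (oddGraph k).Adj u₁ u₂ ∧ (oddGraph k).Adj u₂ u₃ ∧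
      u₀ ≠ u₂ ∧ u₁ ≠ u₃) :
    ∃ x, IsAlternatingWalk 3 (fun j => ![u₀, u₁, u₂, u₃] (Fin.clamp j 3)) x := by
  obtain ⟨h01, h12, h23, h02, h13⟩ := h
  obtain ⟨a, ha⟩ := exists_eq_compl_insert_of_adj h01
  obtain ⟨b, hb⟩ := exists_eq_compl_insert_of_adj h12
  obtain ⟨c, hc⟩ := exists_eq_compl_insert_of_adj h23
  have hc₀ : c ∉ u₀.1 := by
    have := mem_of_eq_compl_insert_of_ne hb hc h13
    rw [ha, mem_compl, mem_insert, not_or] at this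
    exact this.2
  refine ⟨fun j => ![a, b, c] (Fin.clamp j 2), fun j hj => ?_⟩
  interval_cases j
  · exact ⟨ha, iff_of_false (notMem_of_eq_compl_insert ha) (by decide)⟩
  · exact ⟨hb, iff_of_true (mem_of_eq_compl_insert_of_ne ha hb h02) (by decide)⟩
  · exact ⟨hc, iff_of_false hc₀ (by decide)⟩

theorem oddGraph_threeArc_transitive {k : ℕ} {u₀ u₁ u₂ u₃ v₀ v₁ v₂ v₃ : OddVertex k}
    (hu : (oddGraph k).Adj u₀ u₁ ∧ (oddGraph k).Adj u₁ u₂ ∧ (oddGraph k).Adj u₂ u₃ ∧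
      u₀ ≠ u₂ ∧ u₁ ≠ u₃)
    (hv : (oddGraph k).Adj v₀ v₁ ∧ (oddGraph k).Adj v₁ v₂ ∧ (oddGraph k).Adj v₂ v₃ ∧
      v₀ ≠ v₂ ∧ v₁ ≠ v₃) :
    ∃ g ∈ (oddGraph k).autGroup, g u₀ = v₀ ∧ g u₁ = v₁ ∧ g u₂ = v₂ ∧ g u₃ = v₃ := by
  obtain ⟨x, hx⟩ := oddGraph_exists_isAlternatingWalk_of_threeArc hu
  obtain ⟨y, hy⟩ := oddGraph_exists_isAlternatingWalk_of_threeArc hv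
  obtain ⟨σ, hσ⟩ := hx.exists_perm hy
  exact ⟨perm σ, perm_mem_autGroup σ, Subtype.ext (hσ 0 (by omega)),
    Subtype.ext (hσ 1 (by omega)), Subtype.ext (hσ 2 (by omega)), Subtype.ext (hσ 3 le_rfl)⟩

theorem oddGraph_geodesic_and_three_arc_transitive_general (k : ℕ) :
    (oddGraph k).diam = k ∧
    (oddGraph k).GeodesicTransitiveOn (oddGraph k).autGroup k ∧
    ∀ u₀ u₁ u₂ u₃ v₀ v₁ v₂ v₃ : {s : Finset (Fin (2 * k + 1)) // s.card = k},
      ((oddGraph k).Adj u₀ u₁ ∧ (oddGraph k).Adj u₁ u₂ ∧ (oddGraph k).Adj u₂ u₃ ∧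
        u₀ ≠ u₂ ∧ u₁ ≠ u₃) →
      ((oddGraph k).Adj v₀ v₁ ∧ (oddGraph k).Adj v₁ v₂ ∧ (oddGraph k).Adj v₂ v₃ ∧
        v₀ ≠ v₂ ∧ v₁ ≠ v₃) →
      ∃ g ∈ (oddGraph k).autGroup, g u₀ = v₀ ∧ g u₁ = v₁ ∧ g u₂ = v₂ ∧ g u₃ = v₃ := by
  refine ⟨oddGraph_diam k, ⟨oddGraph_vertex_transitive,
    fun i _ hi => ⟨?_, fun _ _ => oddGraph_isNGeodesic_transitive⟩⟩,
    fun _ _ _ _ _ _ _ _ => oddGraph_threeArc_transitive⟩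
  obtain ⟨U, W, hUW⟩ := oddGraph_exists_dist_eq k
  exact (oddGraph_connected k).exists_isNGeodesic (hUW ▸ hi)

/-- For `k ≥ 2`, the Odd graph `O_k` has diameter `k` and is
geodesic transitive and `3`-arc transitive: its automorphism group is transitive on
the vertices, on the `i`-geodesics for all `1 ≤ i ≤ k`, and on the `3`-arcs. -/
theorem oddGraph_geodesic_and_three_arc_transitive (k : ℕ) (hk : 2 ≤ k) :
    (oddGraph k).diam = k ∧
    (oddGraph k).GeodesicTransitiveOn (oddGraph k).autGroup k ∧
    ∀ u₀ u₁ u₂ u₃ v₀ v₁ v₂ v₃ : {s : Finset (Fin (2 * k + 1)) // s.card = k},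
      ((oddGraph k).Adj u₀ u₁ ∧ (oddGraph k).Adj u₁ u₂ ∧ (oddGraph k).Adj u₂ u₃ ∧
        u₀ ≠ u₂ ∧ u₁ ≠ u₃) →
      ((oddGraph k).Adj v₀ v₁ ∧ (oddGraph k).Adj v₁ v₂ ∧ (oddGraph k).Adj v₂ v₃ ∧
        v₀ ≠ v₂ ∧ v₁ ≠ v₃) →
      ∃ g ∈ (oddGraph k).autGroup, g u₀ = v₀ ∧ g u₁ = v₁ ∧ g u₂ = v₂ ∧ g u₃ = v₃ :=
  oddGraph_geodesic_and_three_arc_transitive_general k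
end
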